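/- arXiv:0704.0040 — 4 statements merged into one kernel-verified Lean document; each statement's English description precedes it below -/
import Mathlib

section
/- Let (𝔄_i)_{i∈I} be a family of *-subalgebras of 𝔄, each containing 𝔅, which is c-free with respect to (Φ, Ψ), and let I = ⊔_{j∈J} I_j be a partition of the index set I. For each j ∈ J let 𝔄^{(j)} be the *-subalgebra of 𝔄 generated by ⋃_{i∈I_j} 𝔄_i. Then the family (𝔄^{(j)})_{j∈J} is c-free with respect to (Φ, Ψ). -/
/-!
For a block `T ⊆ I`, the *-algebra generated by the `𝔄ᵢ`, `i ∈ T`, lies in the linear span of `𝔇`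
and of the products `a₁ ⋯ aₙ` of `Ψ`-centered letters `aₖ ∈ 𝔄_{iₖ}`, `iₖ ∈ T`, with consecutive
indices distinct: multiplying such a word on the right by a letter either appends the letter or
merges it into the last one, and a merged letter `e` splits as `(e - Ψ e) + Ψ e`, where `Ψ e ∈ 𝔇`
is absorbed into the preceding letter. By c-freeness `Ψ` kills these words, so a `Ψ`-centered
element of the generated algebra lies in their span. An alternating product of words taken from
different blocks is again an alternating word of the original family, so c-freeness of the `𝔄ᵢ`
gives both identities for words, and multilinearity of the product extends them to spans.
-/

/-- The family `S` of *-subalgebras of `A` is conditionally free (c-free) with respect to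
`(Φ, Ψ)`: for every `n ≥ 1`, every tuple `a₁, …, aₙ` with `aⱼ ∈ S (ε j)`,
`ε(1) ≠ ε(2) ≠ … ≠ ε(n)` (adjacent indices distinct) and `Ψ(aⱼ) = 0`, one has
`Ψ(a₁⋯aₙ) = 0` and `Φ(a₁⋯aₙ) = Φ(a₁)⋯Φ(aₙ)`. -/
def IsCFreeFamily {B A I : Type*} [Ring B] [Algebra ℂ B] [Ring A] [Algebra ℂ A]
    [StarRing A] [StarModule ℂ A]
    (Φ Ψ : A →ₗ[ℂ] B) (S : I → StarSubalgebra ℂ A) : Prop :=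
  ∀ (m : ℕ) (ε : Fin (m + 1) → I), (∀ i : Fin m, ε i.castSucc ≠ ε i.succ) →
    ∀ a : Fin (m + 1) → A, (∀ j, a j ∈ S (ε j)) → (∀ j, Ψ (a j) = 0) →
      Ψ (List.ofFn a).prod = 0 ∧
      Φ (List.ofFn a).prod = (List.ofFn fun j => Φ (a j)).prod

section Multilinear

variable {R ι N : Type*} {M : ι → Type*} [Semiring R] [Fintype ι] [DecidableEq ι]
  [∀ k, AddCommMonoid (M k)] [∀ k, Module R (M k)] [AddCommMonoid N] [Module R N]

theorem MultilinearMap.eq_zero_of_forall_mem_span (F : MultilinearMap R M N) {s : ∀ k, Set (M k)}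
    (hF : ∀ a : ∀ k, M k, (∀ k, a k ∈ s k) → F a = 0) {a : ∀ k, M k}
    (ha : ∀ k, a k ∈ Submodule.span R (s k)) : F a = 0 := by
  suffices h : ∀ t : Finset ι, ∀ a : ∀ k, M k, (∀ k, a k ∈ Submodule.span R (s k)) →
      (∀ k ∉ t, a k ∈ s k) → F a = 0 from h Finset.univ a ha (by simp)
  intro t
  induction t using Finset.induction_on with
  | empty => exact fun a _ hs => hF a fun k => hs k (Finset.notMem_empty k)
  | insert k t _ ih =>
    intro a hspan hs
    have hker : Submodule.span R (s k) ≤ LinearMap.ker (F.toLinearMap a k) := by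
      refine Submodule.span_le.mpr fun x hx => ?_
      refine ih _ (fun k' => ?_) (fun k' hk' => ?_)
      · rcases eq_or_ne k' k with rfl | hk
        · simpa using Submodule.subset_span hx
        · simpa [hk] using hspan k'
      · rcases eq_or_ne k' k with rfl | hk
        · simpa using hx
        · simpa [hk] using hs k' (by simp [hk, hk'])
    simpa using hker (hspan k)

end Multilinear

section Words

variable {B A I : Type*} [Ring B] [Algebra ℂ B] [Ring A] [Algebra ℂ A] [StarRing A]
  [StarModule ℂ A] {Φ Ψ : A →ₗ[ℂ] B} {S : I → StarSubalgebra ℂ A}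

variable (Ψ S) in
/-- `l = [(i₁, a₁), …, (iₙ, aₙ)]` encodes the word `a₁ ⋯ aₙ` with `aₖ ∈ S iₖ`; it may be empty. -/
def IsCenteredWord (T : Set I) (l : List (I × A)) : Prop :=
  (l.map Prod.fst).IsChain (· ≠ ·) ∧ ∀ p ∈ l, p.1 ∈ T ∧ p.2 ∈ S p.1 ∧ Ψ p.2 = 0

theorem IsCFreeFamily.map_prod_of_isCenteredWord (hfree : IsCFreeFamily Φ Ψ S) {T : Set I}
    {l : List (I × A)} (hne : l ≠ []) (hl : IsCenteredWord Ψ S T l) :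
    Ψ (l.map Prod.snd).prod = 0 ∧
      Φ (l.map Prod.snd).prod = (l.map fun p => Φ p.2).prod := by
  obtain ⟨x, t, rfl⟩ := List.exists_cons_of_ne_nil hne
  set l := x :: t
  have hchain := hl.1
  rw [← List.ofFn_getElem_eq_map, List.isChain_ofFn] at hchain
  have h : Ψ (List.ofFn fun k : Fin l.length => l[(k : ℕ)].2).prod = 0 ∧
      Φ (List.ofFn fun k : Fin l.length => l[(k : ℕ)].2).prod =
        (List.ofFn fun k : Fin l.length => Φ l[(k : ℕ)].2).prod :=
    hfree t.length (fun k => l[(k : ℕ)].1) (fun k => hchain k (by simp [l]))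
      (fun k => l[(k : ℕ)].2) (fun k => (hl.2 _ (List.getElem_mem _)).2.1)
      (fun k => (hl.2 _ (List.getElem_mem _)).2.2)
  simpa only [List.ofFn_getElem_eq_map, List.ofFn_getElem_eq_map l fun p => Φ p.2] using h

variable (Ψ S) in
def centeredWords (T : Set I) : Set A :=
  {x | ∃ l, l ≠ [] ∧ IsCenteredWord Ψ S T l ∧ (l.map Prod.snd).prod = x}

theorem IsCFreeFamily.map_prod_centeredWords {J : Type*} (hfree : IsCFreeFamily Φ Ψ S)
    (f : I → J) {m : ℕ} {ε : Fin (m + 1) → J} (hε : ∀ k : Fin m, ε k.castSucc ≠ ε k.succ)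
    {a : Fin (m + 1) → A} (ha : ∀ k, a k ∈ centeredWords Ψ S (f ⁻¹' {ε k})) :
    Ψ (List.ofFn a).prod = 0 ∧ Φ (List.ofFn a).prod = (List.ofFn fun k => Φ (a k)).prod := by
  choose l hne hl hprod using ha
  have hfst_mem {k : Fin (m + 1)} {i : I} (hi : i ∈ (l k).map Prod.fst) : f i = ε k := by
    obtain ⟨p, hp, rfl⟩ := List.mem_map.mp hi
    exact (hl k).2 p hp |>.1
  have hchain : ((List.ofFn l).flatten.map Prod.fst).IsChain (· ≠ ·) := by
    rw [List.map_flatten, List.map_ofFn, List.isChain_flatten (by simp [List.mem_ofFn, hne])]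
    refine ⟨fun _ h => ?_, List.isChain_ofFn.mpr ?_⟩
    · obtain ⟨k, rfl⟩ := List.mem_ofFn.mp h
      exact (hl k).1
    · intro k hk i hi i' hi' hii'
      subst hii'
      have h₁ := hfst_mem (List.mem_of_mem_getLast? hi)
      have h₂ := hfst_mem (List.mem_of_mem_head? hi')
      exact hε ⟨k, by omega⟩ (h₁.symm.trans h₂)
  have hword : IsCenteredWord Ψ S Set.univ (List.ofFn l).flatten := by
    refine ⟨hchain, fun p hp => ?_⟩
    obtain ⟨_, hk, hpk⟩ := List.mem_flatten.mp hp
    obtain ⟨k, rfl⟩ := List.mem_ofFn.mp hk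
    exact ⟨trivial, ((hl k).2 p hpk).2⟩
  have hflat_ne : (List.ofFn l).flatten ≠ [] := by
    simp [List.flatten_eq_nil_iff, List.mem_ofFn, hne]
  have hprod_eq : ((List.ofFn l).flatten.map Prod.snd).prod = (List.ofFn a).prod := by
    simp [List.map_flatten, List.prod_flatten, List.map_ofFn, Function.comp_def, hprod]
  have hΦprod_eq : ((List.ofFn l).flatten.map fun p => Φ p.2).prod =
      (List.ofFn fun k => Φ (a k)).prod := by
    simp only [List.map_flatten, List.prod_flatten, List.map_ofFn, Function.comp_def]
    congr 1
    refine List.ofFn_inj.mpr (funext fun k => ?_)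
    rw [← hprod k, (hfree.map_prod_of_isCenteredWord (hne k) (hl k)).2]
  rw [← hprod_eq, ← hΦprod_eq]
  exact hfree.map_prod_of_isCenteredWord hflat_ne hword

theorem IsCFreeFamily.map_prod_span_centeredWords {J : Type*} (hfree : IsCFreeFamily Φ Ψ S)
    (f : I → J) {m : ℕ} {ε : Fin (m + 1) → J} (hε : ∀ k : Fin m, ε k.castSucc ≠ ε k.succ)
    {a : Fin (m + 1) → A} (ha : ∀ k, a k ∈ Submodule.span ℂ (centeredWords Ψ S (f ⁻¹' {ε k}))) :
    Ψ (List.ofFn a).prod = 0 ∧ Φ (List.ofFn a).prod = (List.ofFn fun k => Φ (a k)).prod := by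
  have hwords {a : Fin (m + 1) → A} (ha : ∀ k, a k ∈ centeredWords Ψ S (f ⁻¹' {ε k})) :=
    hfree.map_prod_centeredWords f hε ha
  constructor
  · simpa using (Ψ.compMultilinearMap (MultilinearMap.mkPiAlgebraFin ℂ (m + 1) A)
      ).eq_zero_of_forall_mem_span (fun a ha => by simpa using (hwords ha).1) ha
  · simpa [sub_eq_zero] using (Φ.compMultilinearMap (MultilinearMap.mkPiAlgebraFin ℂ (m + 1) A) -
      (MultilinearMap.mkPiAlgebraFin ℂ (m + 1) B).compLinearMap fun _ => Φ
      ).eq_zero_of_forall_mem_span (fun a ha => by simpa [sub_eq_zero] using (hwords ha).2) ha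

end Words

section WordSpan

variable {B A I : Type*} [Ring B] [Algebra ℂ B] [StarRing B] [StarModule ℂ B] [Ring A]
  [Algebra ℂ A] [StarRing A] [StarModule ℂ A] {ι : B →⋆ₐ[ℂ] A} {D : StarSubalgebra ℂ B}
  {Ψ : A →ₗ[ℂ] B} {S : I → StarSubalgebra ℂ A} {T : Set I}

variable (ι D Ψ S) in
def wordSpan (T : Set I) : Submodule ℂ A :=
  Submodule.span ℂ (ι '' D ∪ centeredWords Ψ S T)

theorem sub_map_mem_span_centeredWords {Φ : A →ₗ[ℂ] B} (hfree : IsCFreeFamily Φ Ψ S)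
    (hΨid : ∀ d : B, d ∈ D → Ψ (ι d) = d) {x : A} (hx : x ∈ wordSpan ι D Ψ S T) :
    x - ι (Ψ x) ∈ Submodule.span ℂ (centeredWords Ψ S T) := by
  induction hx using Submodule.span_induction with
  | mem y hy =>
    rcases hy with ⟨d, hd, rfl⟩ | ⟨l, hne, hl, rfl⟩
    · simp [hΨid d hd]
    · rw [(hfree.map_prod_of_isCenteredWord hne hl).1, map_zero, sub_zero]
      exact Submodule.subset_span ⟨l, hne, hl, rfl⟩
  | zero => simp
  | add x y _ _ hx hy => simpa [add_sub_add_comm] using add_mem hx hy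
  | smul r x _ hx => simpa [smul_sub] using Submodule.smul_mem _ r hx

section Closure

variable (hΨD : ∀ a : A, Ψ a ∈ D)
  (hΨbimod : ∀ d d' : B, d ∈ D → d' ∈ D → ∀ a : A, Ψ (ι d * a * ι d') = d * Ψ a * d')
  (hΨid : ∀ d : B, d ∈ D → Ψ (ι d) = d) (hS : ∀ (i : I) (b : B), ι b ∈ S i)

include hΨbimod hS in
theorem prod_mul_map_mem_wordSpan {u : List (I × A)} (hu : IsCenteredWord Ψ S T u) {d : B}
    (hd : d ∈ D) : (u.map Prod.snd).prod * ι d ∈ wordSpan ι D Ψ S T := by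
  rcases u.eq_nil_or_concat' with rfl | ⟨v, q, rfl⟩
  · rw [List.map_nil, List.prod_nil, one_mul]
    exact Submodule.subset_span (Or.inl ⟨d, hd, rfl⟩)
  refine Submodule.subset_span (Or.inr ⟨v ++ [(q.1, q.2 * ι d)], by simp, ⟨?_, ?_⟩, ?_⟩)
  · simpa using hu.1
  · intro p hp
    rcases List.mem_append.mp hp with hp | hp
    · exact hu.2 p (by simp [hp])
    obtain ⟨hqT, hqS, hqΨ⟩ := hu.2 q (by simp)
    obtain rfl := List.mem_singleton.mp hp
    refine ⟨hqT, mul_mem hqS (hS _ _), ?_⟩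
    simpa [hqΨ] using hΨbimod 1 d D.one_mem hd q.2
  · simp [mul_assoc]

include hΨD hΨbimod hΨid hS in
theorem prod_mul_mem_wordSpan_of_isChain {v : List (I × A)} (hv : IsCenteredWord Ψ S T v)
    {i : I} (hi : i ∈ T) (hchain : (v.map Prod.fst ++ [i]).IsChain (· ≠ ·)) {e : A}
    (he : e ∈ S i) : (v.map Prod.snd).prod * e ∈ wordSpan ι D Ψ S T := by
  have hsplit : (v.map Prod.snd).prod * e =
      ((v ++ [(i, e - ι (Ψ e))]).map Prod.snd).prod + (v.map Prod.snd).prod * ι (Ψ e) := by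
    simp [mul_sub]
  rw [hsplit]
  refine add_mem (Submodule.subset_span (Or.inr ⟨_, by simp, ⟨by simpa using hchain, ?_⟩, rfl⟩))
    (prod_mul_map_mem_wordSpan hΨbimod hS hv (hΨD e))
  intro p hp
  rcases List.mem_append.mp hp with hp | hp
  · exact hv.2 p hp
  obtain rfl := List.mem_singleton.mp hp
  exact ⟨hi, sub_mem he (hS i _), by rw [map_sub, hΨid _ (hΨD e), sub_self]⟩

include hΨD hΨbimod hΨid hS in
theorem prod_mul_mem_wordSpan {u : List (I × A)} (hu : IsCenteredWord Ψ S T u) {i : I}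
    (hi : i ∈ T) {c : A} (hc : c ∈ S i) : (u.map Prod.snd).prod * c ∈ wordSpan ι D Ψ S T := by
  rcases u.eq_nil_or_concat' with rfl | ⟨v, q, rfl⟩
  · exact prod_mul_mem_wordSpan_of_isChain hΨD hΨbimod hΨid hS ⟨by simp, by simp⟩ hi (by simp) hc
  have hv : IsCenteredWord Ψ S T v :=
    ⟨(List.isChain_append.mp (by simpa using hu.1)).1, fun p hp => hu.2 p (by simp [hp])⟩
  by_cases hq : q.1 = i
  · have hqS := (hu.2 q (by simp)).2.1
    rw [hq] at hqS
    simpa [mul_assoc] using prod_mul_mem_wordSpan_of_isChain hΨD hΨbimod hΨid hS hv hi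
      (by simpa [hq] using hu.1) (mul_mem hqS hc)
  · exact prod_mul_mem_wordSpan_of_isChain hΨD hΨbimod hΨid hS hu hi
      (hu.1.append (List.isChain_singleton i) (by simpa using hq)) hc

include hΨD hΨbimod hΨid hS in
theorem mul_mem_wordSpan {x : A} (hx : x ∈ wordSpan ι D Ψ S T) {i : I} (hi : i ∈ T) {c : A}
    (hc : c ∈ S i) : x * c ∈ wordSpan ι D Ψ S T := by
  induction hx using Submodule.span_induction with
  | mem y hy =>
    rcases hy with ⟨d, hd, rfl⟩ | ⟨l, -, hl, rfl⟩
    · simpa [mul_assoc] using prod_mul_mem_wordSpan hΨD hΨbimod hΨid hS (u := [])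
        ⟨by simp, by simp⟩ hi (mul_mem (hS i d) hc)
    · exact prod_mul_mem_wordSpan hΨD hΨbimod hΨid hS hl hi hc
  | zero => simp
  | add x y _ _ hx hy => simpa [add_mul] using add_mem hx hy
  | smul r x _ hx => simpa using Submodule.smul_mem _ r hx

include hΨD hΨbimod hΨid hS in
theorem mem_wordSpan_of_mem_adjoin {x : A}
    (hx : x ∈ StarAlgebra.adjoin ℂ (⋃ i ∈ T, (S i : Set A))) : x ∈ wordSpan ι D Ψ S T := by
  set s := ⋃ i ∈ T, (S i : Set A)
  have hstar : star s ⊆ s := by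
    intro y hy
    obtain ⟨i, hi, hyi⟩ := Set.mem_iUnion₂.mp (Set.mem_star.mp hy)
    exact Set.mem_iUnion₂.mpr ⟨i, hi, by simpa using star_mem hyi⟩
  have hx' : x ∈ Subalgebra.toSubmodule (Algebra.adjoin ℂ s) := by
    rwa [← Set.union_eq_self_of_subset_right hstar, ← StarAlgebra.adjoin_toSubalgebra]
  rw [Algebra.adjoin_eq_span] at hx'
  refine Submodule.span_le.mpr (fun y hy => ?_) hx'
  induction hy using Submonoid.closure_induction_right with
  | one => exact Submodule.subset_span (Or.inl ⟨1, D.one_mem, map_one ι⟩)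
  | mul_right y _ c hc hy =>
    obtain ⟨i, hi, hci⟩ := Set.mem_iUnion₂.mp hc
    exact mul_mem_wordSpan hΨD hΨbimod hΨid hS hy hi hci

end Closure

end WordSpan

theorem stmt_2_general {B A : Type*} {I J : Type*}
    [CStarAlgebra B]
    [Ring A] [Algebra ℂ A] [StarRing A] [StarModule ℂ A]
    -- `𝔅` sits inside `𝔄` as a unital *-subalgebra:
    (ι : B →⋆ₐ[ℂ] A)
    -- `𝔇` is a C*-subalgebra of `𝔅`:
    (D : StarSubalgebra ℂ B)
    -- `Φ : 𝔄 → 𝔅` is a conditional expectation: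
    (Φ : A →ₗ[ℂ] B)
    -- `Ψ : 𝔄 → 𝔇` is a conditional expectation:
    (Ψ : A →ₗ[ℂ] B) (hΨD : ∀ a : A, Ψ a ∈ D)
    (hΨbimod : ∀ d d' : B, d ∈ D → d' ∈ D → ∀ a : A, Ψ (ι d * a * ι d') = d * Ψ a * d')
    (hΨid : ∀ d : B, d ∈ D → Ψ (ι d) = d)
    -- `(𝔄ᵢ)_{i ∈ I}`: *-subalgebras of `𝔄`, each containing `𝔅`:
    (S : I → StarSubalgebra ℂ A) (hS : ∀ (i : I) (b : B), ι b ∈ S i)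
    -- c-free with respect to `(Φ, Ψ)`:
    (hfree : IsCFreeFamily Φ Ψ S)
    -- a partition of the index set, encoded by the fibers of `f : I → J`:
    (f : I → J) :
    IsCFreeFamily Φ Ψ
      (fun j : J => StarAlgebra.adjoin ℂ (⋃ i ∈ f ⁻¹' {j}, (S i : Set A))) := by
  intro m ε hε a hmem hcent
  refine hfree.map_prod_span_centeredWords f hε fun k => ?_
  simpa [hcent k] using sub_map_mem_span_centeredWords hfree hΨid
    (mem_wordSpan_of_mem_adjoin hΨD hΨbimod hΨid hS (hmem k))

theorem stmt_2 {B A : Type*} {I J : Type*}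
    [CStarAlgebra B] [PartialOrder B] [StarOrderedRing B]
    [Ring A] [Algebra ℂ A] [StarRing A] [StarModule ℂ A]
    -- `𝔅` sits inside `𝔄` as a unital *-subalgebra:
    (ι : B →⋆ₐ[ℂ] A) (hι : Function.Injective ι)
    -- `𝔇` is a C*-subalgebra of `𝔅`:
    (D : StarSubalgebra ℂ B) (hD : IsClosed (D : Set B))
    -- `Φ : 𝔄 → 𝔅` is a conditional expectation:
    (Φ : A →ₗ[ℂ] B)
    (hΦbimod : ∀ (b b' : B) (a : A), Φ (ι b * a * ι b') = b * Φ a * b')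
    (hΦid : ∀ b : B, Φ (ι b) = b)
    -- `Ψ : 𝔄 → 𝔇` is a conditional expectation:
    (Ψ : A →ₗ[ℂ] B) (hΨD : ∀ a : A, Ψ a ∈ D)
    (hΨbimod : ∀ d d' : B, d ∈ D → d' ∈ D → ∀ a : A, Ψ (ι d * a * ι d') = d * Ψ a * d')
    (hΨid : ∀ d : B, d ∈ D → Ψ (ι d) = d)
    -- `(𝔄ᵢ)_{i ∈ I}`: *-subalgebras of `𝔄`, each containing `𝔅`:
    (S : I → StarSubalgebra ℂ A) (hS : ∀ (i : I) (b : B), ι b ∈ S i)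
    -- c-free with respect to `(Φ, Ψ)`:
    (hfree : IsCFreeFamily Φ Ψ S)
    -- a partition of the index set, encoded by the fibers of `f : I → J`:
    (f : I → J) :
    IsCFreeFamily Φ Ψ
      (fun j : J => StarAlgebra.adjoin ℂ (⋃ i ∈ f ⁻¹' {j}, (S i : Set A))) :=
  stmt_2_general ι D Φ Ψ hΨD hΨbimod hΨid S hS hfree f
end

section
/- Let 𝔅 be a unital complex algebra and β, γ ∈ Mul[[𝔅]]. Then: (a) 1 + Iβ is invertible with respect to the formal product; (b) I + IγI is invertible with respect to formal composition; and (c) there is a unique element ρ ∈ Mul[[𝔅]] satisfying β = (ρ ∘ (I + IγI)) · (1 + Iβ), namely ρ = (β (1 + Iβ)^{−1}) ∘ (I + IγI)^{⟨−1⟩}. In particular the c-free R-transform ^cR_{β,γ} is well defined and equals (β (1 + Iβ)^{−1}) ∘ (I + IγI)^{⟨−1⟩}. -/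
/-!
Both inverses are built degree by degree. Since `u = 1 + Iβ` has constant term `1`,
`δₙ = -∑_{k ≥ 1} uₖ δₙ₋ₖ` solves `u δ = 1`. Since `α = I + IγI` has `α₀ = 0` and
`α₁ = id`, the one-block term of `(α ∘ δ)ₙ` is `δₙ` itself while all other terms involve `δ`
only in lower degrees, so `α ∘ δ = I` can be solved for `δₙ` as well.

These right inverses are two-sided because they have right inverses themselves, once both
operations are known to be associative: `mulS` becomes multiplication of the upper triangular
matrices `(ω_{t-s}(b_s, …, b_{t-1}))_{s ≤ t}`, and associativity of `compS` is the bijection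
`Composition.sigmaEquivSigmaPi` between two-step refinements of compositions, valid when the
outer series is multilinear. With two-sided inverses, `β = (ρ ∘ α) u` is equivalent to
`ρ = (β u⁻¹) ∘ α^⟨-1⟩`.
-/

/-- Formal multilinear function series over `B` (underlying functions). -/
abbrev FormalMulSeries (B : Type*) := ∀ n : ℕ, (Fin n → B) → B

/-- The components of `ω` are `ℂ`-multilinear. -/
def IsMultilinearSeries {B : Type*} [Ring B] [Algebra ℂ B] (ω : FormalMulSeries B) : Prop :=
  ∀ (n : ℕ) (b : Fin n → B) (i : Fin n) (x y : B) (c : ℂ),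
    ω n (Function.update b i (x + y))
        = ω n (Function.update b i x) + ω n (Function.update b i y)
    ∧ ω n (Function.update b i (c • x)) = c • ω n (Function.update b i x)

/-- The formal product of two formal multilinear function series:
`(αβ)ₙ(b₁,…,bₙ) = ∑ₖ αₖ(b₁,…,bₖ) βₙ₋ₖ(bₖ₊₁,…,bₙ)`. -/
def mulS {B : Type*} [Ring B] (α β : FormalMulSeries B) : FormalMulSeries B := fun n b =>
  ∑ k : Fin (n + 1),
    α k.1 (fun i => b ⟨i.1, by have := i.2; have := k.2; omega⟩) *
      β (n - k.1) (fun i => b ⟨k.1 + i.1, by have := i.2; have := k.2; omega⟩)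

/-- Formal composition `(α ∘ β)ₙ(b₁,…,bₙ) = ∑ α_k(β_{p₁}(…), …, β_{p_k}(…))`, the sum
being over all `k`-tuples `p₁,…,p_k ≥ 1` with `p₁ + ⋯ + p_k = n` (encoded as
`Composition n`); the `0`-th component is `α₀`. -/
def compS {B : Type*} [Ring B] (α β : FormalMulSeries B) : FormalMulSeries B := fun n b =>
  ∑ c : Composition n,
    α c.length (fun i => β (c.blocksFun i) (fun j => b (c.embedding i j)))

/-- The series `1 = (1, 0, 0, …)`. -/
def oneS {B : Type*} [Ring B] : FormalMulSeries B := fun n _ => if n = 0 then 1 else 0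

/-- The series `I = (0, id_𝔅, 0, 0, …)`. -/
def idS {B : Type*} [Ring B] : FormalMulSeries B := fun n b =>
  if h : n = 1 then b ⟨0, by omega⟩ else 0

/-- `δ` is a two-sided inverse of `α` for the formal product. -/
def IsMulInvOf {B : Type*} [Ring B] (δ α : FormalMulSeries B) : Prop :=
  mulS α δ = oneS ∧ mulS δ α = oneS

/-- `δ` is a two-sided inverse of `α` for formal composition (with vanishing constant
term, as required for formal composition to make sense). -/
def IsCompInvOf {B : Type*} [Ring B] (δ α : FormalMulSeries B) : Prop :=
  (∀ b : Fin 0 → B, δ 0 b = 0) ∧ compS α δ = idS ∧ compS δ α = idS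

open Function

section Reindexing

variable {B : Type*}

theorem apply_congr_of_eq (ω : FormalMulSeries B) {n m : ℕ} (h : n = m) {v : Fin n → B}
    {w : Fin m → B} (hvw : ∀ (i : ℕ) (hn : i < n) (hm : i < m), v ⟨i, hn⟩ = w ⟨i, hm⟩) :
    ω n v = ω m w := by
  subst h
  exact congrArg (ω n) (funext fun i => hvw i i.2 i.2)

theorem apply_of_eq_zero [Zero B] {α : FormalMulSeries B} (hα₀ : ∀ b, α 0 b = 0) {n : ℕ}
    (hn : n = 0) (b : Fin n → B) : α n b = 0 := by
  subst hn
  exact hα₀ b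

theorem apply_of_eq_one {α : FormalMulSeries B} (hα₁ : ∀ b, α 1 b = b 0) {n : ℕ} (hn : n = 1)
    (b : Fin n → B) : α n b = b ⟨0, by omega⟩ := by
  subst hn
  exact hα₁ b

end Reindexing

section Multilinear

variable {R B : Type*} [CommSemiring R] [Ring B] [Algebra R B]

variable (R) in
def IsMultilinearFun {n : ℕ} (f : (Fin n → B) → B) : Prop :=
  ∀ (b : Fin n → B) (i : Fin n) (x y : B) (c : R),
    f (update b i (x + y)) = f (update b i x) + f (update b i y)
    ∧ f (update b i (c • x)) = c • f (update b i x)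

namespace IsMultilinearFun

variable {n : ℕ} {f g : (Fin n → B) → B}

def toMultilinearMap (hf : IsMultilinearFun R f) : MultilinearMap R (fun _ : Fin n => B) B where
  toFun := f
  map_update_add' b i x y := by
    convert (hf b i x y 0).1
  map_update_smul' b i c x := by
    convert (hf b i x x c).2

theorem map_coord_zero (hf : IsMultilinearFun R f) {b : Fin n → B} {i : Fin n} (hb : b i = 0) :
    f b = 0 :=
  hf.toMultilinearMap.map_coord_zero i hb

theorem of_isEmpty (f : (Fin 0 → B) → B) : IsMultilinearFun R f :=
  fun _ i => i.elim0

theorem zero : IsMultilinearFun R (fun _ : Fin n → B => (0 : B)) :=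
  fun _ _ _ _ _ => by simp

theorem add (hf : IsMultilinearFun R f) (hg : IsMultilinearFun R g) :
    IsMultilinearFun R (fun b => f b + g b) := fun b i x y c => by
  simp only [(hf b i x y c).1, (hg b i x y c).1, (hf b i x y c).2, (hg b i x y c).2, smul_add,
    and_true]
  exact add_add_add_comm ..

theorem neg (hf : IsMultilinearFun R f) : IsMultilinearFun R (fun b => -f b) := fun b i x y c => by
  simp only [(hf b i x y c).1, (hf b i x y c).2, neg_add, smul_neg, and_self]

theorem sub (hf : IsMultilinearFun R f) (hg : IsMultilinearFun R g) :
    IsMultilinearFun R (fun b => f b - g b) := by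
  simpa only [sub_eq_add_neg] using hf.add hg.neg

theorem sum {ι : Type*} (s : Finset ι) {F : ι → (Fin n → B) → B}
    (hF : ∀ k ∈ s, IsMultilinearFun R (F k)) : IsMultilinearFun R (fun b => ∑ k ∈ s, F k b) := by
  refine fun b i x y c => ⟨?_, ?_⟩
  · rw [← Finset.sum_add_distrib]
    exact Finset.sum_congr rfl fun k hk => (hF k hk b i x y c).1
  · rw [Finset.smul_sum]
    exact Finset.sum_congr rfl fun k hk => (hF k hk b i x y c).2

theorem mul_comp {k m : ℕ} {f : (Fin k → B) → B} {g : (Fin m → B) → B}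
    (hf : IsMultilinearFun R f) (hg : IsMultilinearFun R g) {e₁ : Fin k → Fin n}
    {e₂ : Fin m → Fin n} (he₁ : Injective e₁) (he₂ : Injective e₂)
    (he : IsCompl (Set.range e₁) (Set.range e₂)) :
    IsMultilinearFun R (fun b => f (b ∘ e₁) * g (b ∘ e₂)) := by
  intro b i x y c
  rcases he.codisjoint.top_le (Set.mem_univ i) with ⟨j, rfl⟩ | ⟨j, rfl⟩
  · have hj : e₁ j ∉ Set.range e₂ := he.disjoint.notMem_of_mem_left (Set.mem_range_self j)
    simp only [update_comp_eq_of_injective _ he₁, update_comp_eq_of_notMem_range _ _ hj,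
      (hf _ j x y c).1, (hf _ j x y c).2, add_mul, smul_mul_assoc, and_self]
  · have hj : e₂ j ∉ Set.range e₁ := he.disjoint.notMem_of_mem_right (Set.mem_range_self j)
    simp only [update_comp_eq_of_injective _ he₂, update_comp_eq_of_notMem_range _ _ hj,
      (hg _ j x y c).1, (hg _ j x y c).2, mul_add, mul_smul_comm, and_self]

theorem mul_append {k m : ℕ} (h : k + m = n) {f : (Fin k → B) → B} {g : (Fin m → B) → B}
    (hf : IsMultilinearFun R f) (hg : IsMultilinearFun R g) :
    IsMultilinearFun R (fun b : Fin n → B =>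
      f (fun i => b ⟨i, by omega⟩) * g (fun i => b ⟨k + i, by omega⟩)) := by
  have hrange₁ :
      Set.range (fun i : Fin k => (⟨i, by omega⟩ : Fin n)) = {j : Fin n | (j : ℕ) < k} := by
    ext j
    exact ⟨by rintro ⟨i, rfl⟩; exact i.2, fun hj => ⟨⟨j, hj⟩, rfl⟩⟩
  have hrange₂ :
      Set.range (fun i : Fin m => (⟨k + i, by omega⟩ : Fin n)) = {j : Fin n | (j : ℕ) < k}ᶜ := by
    ext j
    refine ⟨by rintro ⟨i, rfl⟩; simp, fun hj => ?_⟩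
    simp only [Set.mem_compl_iff, Set.mem_ofPred_eq, not_lt] at hj
    exact ⟨⟨j - k, by omega⟩, Fin.ext (by simp [hj])⟩
  refine hf.mul_comp hg (fun i j hij => Fin.ext (by simpa using hij))
    (fun i j hij => Fin.ext (by simpa using hij)) ?_
  rw [hrange₁, hrange₂]
  exact isCompl_compl

theorem comp_composition (c : Composition n) {f : (Fin c.length → B) → B}
    {g : ∀ i : Fin c.length, (Fin (c.blocksFun i) → B) → B} (hf : IsMultilinearFun R f)
    (hg : ∀ i, IsMultilinearFun R (g i)) :
    IsMultilinearFun R (fun b => f (fun i => g i (b ∘ c.embedding i))) := by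
  intro b j x y r
  have key : ∀ t : B, (fun i => g i (update b j t ∘ c.embedding i)) =
      update (fun i => g i (b ∘ c.embedding i)) (c.index j)
        (g _ (update (b ∘ c.embedding (c.index j)) (c.invEmbedding j) t)) := by
    intro t
    ext i
    by_cases hi : i = c.index j
    · subst hi
      rw [update_self, ← update_comp_eq_of_injective _ (c.embedding _).injective,
        c.embedding_comp_inv]
    · rw [update_of_ne hi, update_comp_eq_of_notMem_range]
      rwa [c.mem_range_embedding_iff']
  simp only [key, (hg _ _ (c.invEmbedding j) x y r).1, (hg _ _ (c.invEmbedding j) x y r).2]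
  exact hf _ _ _ _ r

end IsMultilinearFun

end Multilinear

section MultilinearSeries

variable {B : Type*} [Ring B] [Algebra ℂ B]

theorem isMultilinearSeries_iff {ω : FormalMulSeries B} :
    IsMultilinearSeries ω ↔ ∀ n, IsMultilinearFun ℂ (ω n) :=
  Iff.rfl

theorem isMultilinearSeries_oneS : IsMultilinearSeries (oneS : FormalMulSeries B) := by
  rintro (_ | n)
  · exact IsMultilinearFun.of_isEmpty _
  · exact IsMultilinearFun.zero

theorem isMultilinearSeries_idS : IsMultilinearSeries (idS : FormalMulSeries B) := by
  rintro (_ | _ | n) b i x y c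
  · exact i.elim0
  · obtain rfl := Fin.fin_one_eq_zero i
    simp [idS]
  · simp [idS]

theorem IsMultilinearSeries.add {α β : FormalMulSeries B} (hα : IsMultilinearSeries α)
    (hβ : IsMultilinearSeries β) : IsMultilinearSeries (α + β) :=
  isMultilinearSeries_iff.2 fun n =>
    (isMultilinearSeries_iff.1 hα n).add (isMultilinearSeries_iff.1 hβ n)

theorem IsMultilinearSeries.mulS {α β : FormalMulSeries B} (hα : IsMultilinearSeries α)
    (hβ : IsMultilinearSeries β) : IsMultilinearSeries (mulS α β) :=
  isMultilinearSeries_iff.2 fun n => IsMultilinearFun.sum _ fun k _ =>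
    IsMultilinearFun.mul_append (by have := k.isLt; omega) (hα k) (hβ (n - k))

theorem IsMultilinearSeries.compS {α β : FormalMulSeries B} (hα : IsMultilinearSeries α)
    (hβ : IsMultilinearSeries β) : IsMultilinearSeries (compS α β) :=
  isMultilinearSeries_iff.2 fun _ => IsMultilinearFun.sum _ fun c _ =>
    IsMultilinearFun.comp_composition c (hα _) fun _ => hβ _

end MultilinearSeries

section Product

variable {B : Type*} [Ring B]

theorem idS_apply_one (b : Fin 1 → B) : (idS : FormalMulSeries B) 1 b = b 0 :=
  rfl

theorem idS_apply_of_ne_one {n : ℕ} (hn : n ≠ 1) (b : Fin n → B) :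
    (idS : FormalMulSeries B) n b = 0 :=
  dif_neg hn

theorem idS_apply_of_lt_one {k : ℕ} (hk : k < 1) (b : Fin k → B) :
    (idS : FormalMulSeries B) k b = 0 :=
  idS_apply_of_ne_one (by omega) b

def segmentMatrix (ω : FormalMulSeries B) {n : ℕ} (b : Fin n → B) :
    Matrix (Fin (n + 1)) (Fin (n + 1)) B :=
  Matrix.of fun s t => if h : s ≤ t then ω (t - s) (fun i => b ⟨s + i, by omega⟩) else 0

theorem segmentMatrix_zero_last (ω : FormalMulSeries B) {n : ℕ} (b : Fin n → B) :
    segmentMatrix ω b 0 (Fin.last n) = ω n b := by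
  simp only [segmentMatrix, Matrix.of_apply, Fin.zero_le, dite_true]
  exact apply_congr_of_eq ω (by simp) fun i _ _ => by simp

theorem segmentMatrix_oneS {n : ℕ} (b : Fin n → B) : segmentMatrix oneS b = 1 := by
  ext s t
  simp only [segmentMatrix, oneS, Matrix.of_apply, Matrix.one_apply, Fin.ext_iff, Fin.le_def]
  split_ifs <;> first | rfl | omega

theorem segmentMatrix_mulS (α β : FormalMulSeries B) {n : ℕ} (b : Fin n → B) :
    segmentMatrix (mulS α β) b = segmentMatrix α b * segmentMatrix β b := by
  ext s t
  simp only [segmentMatrix, Matrix.mul_apply, Matrix.of_apply, mulS, dite_mul, zero_mul,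
    mul_dite, mul_zero, Fin.le_def]
  split_ifs with hst
  · refine Fintype.sum_of_injective
      (fun k : Fin (t - s + 1) => (⟨s + k, by omega⟩ : Fin (n + 1)))
      (fun k l hkl => Fin.ext (by simpa using hkl)) _ _ (fun m hm => ?_) (fun k => ?_)
    · split_ifs
      · exact absurd ⟨⟨m - s, by omega⟩, Fin.ext (by simp; omega)⟩ hm
      all_goals rfl
    · have hk := k.isLt
      rw [dif_pos (by simp; omega), dif_pos (by simp)]
      congr 1
      · exact apply_congr_of_eq α (by simp) fun i _ _ => rfl
      · exact apply_congr_of_eq β (by simp; omega) fun i _ _ => by simp [add_assoc]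
  · refine (Finset.sum_eq_zero fun m _ => ?_).symm
    split_ifs <;> first | rfl | omega

theorem eq_of_segmentMatrix_eq {α β : FormalMulSeries B}
    (h : ∀ n (b : Fin n → B), segmentMatrix α b = segmentMatrix β b) : α = β := by
  funext n b
  rw [← segmentMatrix_zero_last α b, ← segmentMatrix_zero_last β b, h]

theorem mulS_assoc (α β γ : FormalMulSeries B) : mulS (mulS α β) γ = mulS α (mulS β γ) :=
  eq_of_segmentMatrix_eq fun _ _ => by simp only [segmentMatrix_mulS, Matrix.mul_assoc]

theorem oneS_mulS (α : FormalMulSeries B) : mulS oneS α = α :=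
  eq_of_segmentMatrix_eq fun _ _ => by rw [segmentMatrix_mulS, segmentMatrix_oneS, one_mul]

theorem mulS_oneS (α : FormalMulSeries B) : mulS α oneS = α :=
  eq_of_segmentMatrix_eq fun _ _ => by rw [segmentMatrix_mulS, segmentMatrix_oneS, mul_one]

theorem mulS_apply_succ (α β : FormalMulSeries B) {n : ℕ} (b : Fin (n + 1) → B) :
    mulS α β (n + 1) b = α 0 ![] * β (n + 1) b + ∑ k : Fin (n + 1),
      α k.succ (fun i => b ⟨i, by omega⟩) *
        β (n + 1 - k.succ) (fun i => b ⟨k.succ + i, by omega⟩) := by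
  rw [mulS, Fin.sum_univ_succ]
  congr 2
  · exact apply_congr_of_eq α rfl fun i h _ => absurd h (by simp)
  · exact apply_congr_of_eq β rfl fun i _ _ => by simp

theorem mulS_apply_eq_zero_of_lt {x y : FormalMulSeries B} {p q : ℕ}
    (hx : ∀ k < p, ∀ b : Fin k → B, x k b = 0) (hy : ∀ k < q, ∀ b : Fin k → B, y k b = 0)
    {n : ℕ} (hn : n < p + q) (b : Fin n → B) : mulS x y n b = 0 := by
  refine Finset.sum_eq_zero fun k _ => ?_
  by_cases hk : (k : ℕ) < p
  · rw [hx _ hk, zero_mul]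
  · rw [hy _ (by omega), mul_zero]

end Product

section ProductInverse

variable {B : Type*} [Ring B]

theorem mulS_left_inv_eq_right_inv {a b c : FormalMulSeries B} (hab : mulS a b = oneS)
    (hbc : mulS b c = oneS) : a = c := by
  rw [← mulS_oneS a, ← hbc, ← mulS_assoc, hab, oneS_mulS]

def mulInv (u : FormalMulSeries B) : FormalMulSeries B
  | 0 => fun _ => 1
  | n + 1 => fun b => -∑ k : Fin (n + 1),
      u k.succ (fun i => b ⟨i, by omega⟩) *
        mulInv u (n + 1 - k.succ) (fun i => b ⟨k.succ + i, by omega⟩)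
termination_by n => n
decreasing_by exact Nat.sub_lt (by omega) k.succ_pos

theorem mulInv_apply_zero (u : FormalMulSeries B) (b : Fin 0 → B) : mulInv u 0 b = 1 := by
  rw [mulInv]

theorem mulS_mulInv {u : FormalMulSeries B} (hu₀ : ∀ b, u 0 b = 1) :
    mulS u (mulInv u) = oneS := by
  funext n b
  cases n with
  | zero => simp [mulS, hu₀, mulInv_apply_zero, oneS]
  | succ n =>
    rw [mulS_apply_succ, hu₀, one_mul, mulInv, neg_add_cancel]
    simp [oneS]

theorem mulInv_mulS {u : FormalMulSeries B} (hu₀ : ∀ b, u 0 b = 1) :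
    mulS (mulInv u) u = oneS := by
  have h := mulS_mulInv (mulInv_apply_zero u)
  rwa [← mulS_left_inv_eq_right_inv (mulS_mulInv hu₀) h] at h

theorem isMulInvOf_mulInv {u : FormalMulSeries B} (hu₀ : ∀ b, u 0 b = 1) :
    IsMulInvOf (mulInv u) u :=
  ⟨mulS_mulInv hu₀, mulInv_mulS hu₀⟩

theorem IsMultilinearSeries.mulInv [Algebra ℂ B] {u : FormalMulSeries B}
    (hu : IsMultilinearSeries u) : IsMultilinearSeries (mulInv u) := by
  refine isMultilinearSeries_iff.2 fun n => ?_
  induction n using Nat.strong_induction_on with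
  | _ n ih =>
    cases n with
    | zero => exact IsMultilinearFun.of_isEmpty _
    | succ n =>
      rw [_root_.mulInv]
      exact (IsMultilinearFun.sum _ fun k _ => IsMultilinearFun.mul_append
        (by have := k.succ.isLt; omega) (hu _) (ih _ (Nat.sub_lt (by omega) k.succ_pos))).neg

end ProductInverse

theorem Composition.blocksFun_lt_of_length_ne_one {n : ℕ} (c : Composition n)
    (hc : c.length ≠ 1) (i : Fin c.length) : c.blocksFun i < n := by
  have : Nontrivial (Fin c.length) := Fin.nontrivial_iff_two_le.2 (by have := i.pos; omega)
  obtain ⟨j, hji⟩ := exists_ne i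
  calc c.blocksFun i < c.blocksFun i + c.blocksFun j := by have := c.one_le_blocksFun j; omega
    _ ≤ ∑ k, c.blocksFun k :=
      Finset.add_le_sum (fun _ _ => Nat.zero_le _) (Finset.mem_univ _) (Finset.mem_univ _) hji.symm
    _ = n := c.sum_blocksFun

section Composition

variable {B : Type*} [Ring B]

def compAlongComposition (α τ : FormalMulSeries B) {n : ℕ} (c : Composition n) (b : Fin n → B) :
    B :=
  α c.length (fun i => τ (c.blocksFun i) (fun j => b (c.embedding i j)))

theorem compS_apply (α τ : FormalMulSeries B) (n : ℕ) (b : Fin n → B) :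
    compS α τ n b = ∑ c : Composition n, compAlongComposition α τ c b :=
  rfl

theorem sum_compAlongComposition_length_eq_one {α τ : FormalMulSeries B}
    (hα₁ : ∀ b, α 1 b = b 0) (hτ₀ : ∀ b, τ 0 b = 0) {n : ℕ} (b : Fin n → B) :
    ∑ c : {c : Composition n // c.length = 1}, compAlongComposition α τ c.1 b = τ n b := by
  cases n with
  | zero =>
    rw [hτ₀]
    refine Finset.sum_eq_zero fun c _ => absurd c.2 ?_
    have := c.1.length_le
    omega
  | succ n =>
    let single : {c : Composition (n + 1) // c.length = 1} := ⟨.single _ n.succ_pos, rfl⟩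
    rw [Fintype.sum_eq_single single fun c hc =>
        absurd (Subtype.ext ((Composition.eq_single_iff_length n.succ_pos).2 c.2)) hc,
      compAlongComposition, apply_of_eq_one hα₁ single.2]
    refine apply_congr_of_eq τ (Composition.single_blocksFun n.succ_pos _) fun i _ _ =>
      congrArg b ?_
    ext
    simp [Composition.coe_embedding]

theorem compS_idS_left {x : FormalMulSeries B} (hx₀ : ∀ b, x 0 b = 0) : compS idS x = x := by
  funext n b
  rw [compS_apply, ← Fintype.sum_subtype_add_sum_subtype (fun c : Composition n => c.length = 1),
    sum_compAlongComposition_length_eq_one idS_apply_one hx₀, add_eq_left]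
  exact Finset.sum_eq_zero fun c _ => idS_apply_of_ne_one c.2 _

theorem compS_idS_right [Algebra ℂ B] {x : FormalMulSeries B} (hx : IsMultilinearSeries x) :
    compS x idS = x := by
  funext n b
  rw [compS_apply, Fintype.sum_eq_single (Composition.ones n)]
  · refine apply_congr_of_eq x (Composition.ones_length n) fun i hi _ => ?_
    rw [apply_of_eq_one idS_apply_one (Composition.ones_blocksFun n ⟨i, hi⟩)]
    congr 1
    ext
    simp
  · intro c hc
    obtain ⟨k, hk, hk1⟩ := Composition.ne_ones_iff.1 hc
    obtain ⟨i, rfl⟩ := List.mem_iff_get.1 hk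
    exact (isMultilinearSeries_iff.1 hx _).map_coord_zero
      (i := ⟨i, by simp [← c.blocks_length]⟩) (idS_apply_of_ne_one hk1.ne' _)

end Composition

section CompositionAssoc

variable {B : Type*} [Ring B] [Algebra ℂ B]

open Composition in
theorem compS_assoc {r : FormalMulSeries B} (hr : IsMultilinearSeries r)
    (q p : FormalMulSeries B) : compS (compS r q) p = compS r (compS q p) := by
  funext n v
  have lhs : compS (compS r q) p n v = ∑ x : (Σ c : Composition n, Composition c.length),
      r x.2.length (fun i => q (x.2.blocksFun i) (fun j => p (x.1.blocksFun (x.2.embedding i j))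
        (fun l => v (x.1.embedding (x.2.embedding i j) l)))) := by
    rw [← Finset.univ_sigma_univ, Finset.sum_sigma]
    rfl
  have rhs : compS r (compS q p) n v =
      ∑ y : (Σ c : Composition n, ∀ i : Fin c.length, Composition (c.blocksFun i)),
        r y.1.length (fun i => q (y.2 i).length (fun j =>
          p ((y.2 i).blocksFun j) (fun l => v (y.1.embedding i ((y.2 i).embedding j l))))) := by
    rw [← Finset.univ_sigma_univ, Finset.sum_sigma]
    refine Finset.sum_congr rfl fun c _ => ?_
    exact (isMultilinearSeries_iff.1 hr c.length).toMultilinearMap.map_sum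
      fun i (d : Composition (c.blocksFun i)) =>
        q d.length fun j => p (d.blocksFun j) fun l => v (c.embedding i (d.embedding j l))
  rw [lhs, rhs, ← (sigmaEquivSigmaPi n).sum_comp]
  refine Finset.sum_congr rfl fun ⟨a, b⟩ _ => ?_
  refine apply_congr_of_eq r (length_gather a b).symm fun i hi₁ hi₂ => ?_
  refine apply_congr_of_eq q (length_sigmaCompositionAux a b ⟨i, hi₁⟩).symm fun j hj₁ hj₂ => ?_
  refine apply_congr_of_eq p (blocksFun_sigmaCompositionAux a b ⟨i, hi₁⟩ ⟨j, hj₁⟩).symm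
    fun l _ _ => congrArg v (Fin.ext ?_)
  simp only [coe_embedding]
  rw [sizeUpTo_sizeUpTo_add _ _ hi₁ hj₁, add_assoc]
  rfl

theorem compS_left_inv_eq_right_inv {a b c : FormalMulSeries B} (ha : IsMultilinearSeries a)
    (hc₀ : ∀ v, c 0 v = 0) (hab : compS a b = idS) (hbc : compS b c = idS) : a = c := by
  rw [← compS_idS_right ha, ← hbc, ← compS_assoc ha, hab, compS_idS_left hc₀]

end CompositionAssoc

section CompositionInverse

variable {B : Type*} [Ring B]

def compInv (α : FormalMulSeries B) : FormalMulSeries B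
  | n => fun b => idS n b - ∑ c : {c : Composition n // c.length ≠ 1},
      α c.1.length (fun i => compInv α (c.1.blocksFun i) (fun j => b (c.1.embedding i j)))
termination_by n => n
decreasing_by exact c.1.blocksFun_lt_of_length_ne_one c.2 i

theorem compInv_apply (α : FormalMulSeries B) {n : ℕ} (b : Fin n → B) :
    compInv α n b = idS n b -
      ∑ c : {c : Composition n // c.length ≠ 1}, compAlongComposition α (compInv α) c.1 b := by
  rw [compInv]
  rfl

theorem compInv_apply_zero {α : FormalMulSeries B} (hα₀ : ∀ b, α 0 b = 0) (b : Fin 0 → B) :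
    compInv α 0 b = 0 := by
  rw [compInv_apply, idS_apply_of_ne_one zero_ne_one, zero_sub, neg_eq_zero]
  exact Finset.sum_eq_zero fun c _ => apply_of_eq_zero hα₀ (by simp) _

theorem compInv_apply_one (α : FormalMulSeries B) (b : Fin 1 → B) : compInv α 1 b = b 0 := by
  rw [compInv_apply, idS_apply_one, sub_eq_self]
  refine Finset.sum_eq_zero fun c _ => absurd (le_antisymm c.1.length_le ?_) c.2
  exact c.1.length_pos_of_pos one_pos

theorem compS_compInv {α : FormalMulSeries B} (hα₀ : ∀ b, α 0 b = 0) (hα₁ : ∀ b, α 1 b = b 0) :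
    compS α (compInv α) = idS := by
  funext n b
  rw [compS_apply, ← Fintype.sum_subtype_add_sum_subtype (fun c : Composition n => c.length = 1),
    sum_compAlongComposition_length_eq_one hα₁ (compInv_apply_zero hα₀), compInv_apply α b,
    sub_add_cancel]

theorem compInv_compS [Algebra ℂ B] {α : FormalMulSeries B} (hα : IsMultilinearSeries α)
    (hα₀ : ∀ b, α 0 b = 0) (hα₁ : ∀ b, α 1 b = b 0) : compS (compInv α) α = idS := by
  have h := compS_compInv (compInv_apply_zero hα₀) (compInv_apply_one α)
  rwa [← compS_left_inv_eq_right_inv hα (compInv_apply_zero (compInv_apply_zero hα₀))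
    (compS_compInv hα₀ hα₁) h] at h

theorem isCompInvOf_compInv [Algebra ℂ B] {α : FormalMulSeries B} (hα : IsMultilinearSeries α)
    (hα₀ : ∀ b, α 0 b = 0) (hα₁ : ∀ b, α 1 b = b 0) : IsCompInvOf (compInv α) α :=
  ⟨compInv_apply_zero hα₀, compS_compInv hα₀ hα₁, compInv_compS hα hα₀ hα₁⟩

theorem IsMultilinearSeries.compInv [Algebra ℂ B] {α : FormalMulSeries B}
    (hα : IsMultilinearSeries α) : IsMultilinearSeries (compInv α) := by
  refine isMultilinearSeries_iff.2 fun n => ?_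
  induction n using Nat.strong_induction_on with
  | _ n ih =>
    rw [_root_.compInv]
    refine (isMultilinearSeries_iff.1 isMultilinearSeries_idS n).sub <|
      IsMultilinearFun.sum _ fun c _ => IsMultilinearFun.comp_composition c.1 (hα _) fun i => ?_
    exact ih _ (c.1.blocksFun_lt_of_length_ne_one c.2 i)

end CompositionInverse

section RTransform

variable {B : Type*} [Ring B]

theorem mulS_idS_left_apply_zero (β : FormalMulSeries B) (b : Fin 0 → B) :
    mulS idS β 0 b = 0 :=
  mulS_apply_eq_zero_of_lt (p := 1) (q := 0) (fun _ => idS_apply_of_lt_one)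
    (fun _ h => absurd h (Nat.not_lt_zero _)) one_pos b

theorem mulS_mulS_idS_left_idS_apply_of_lt_two (γ : FormalMulSeries B) {n : ℕ} (hn : n < 2)
    (b : Fin n → B) : mulS (mulS idS γ) idS n b = 0 :=
  mulS_apply_eq_zero_of_lt (p := 1) (q := 1)
    (fun _ hk => mulS_apply_eq_zero_of_lt (p := 1) (q := 0) (fun _ => idS_apply_of_lt_one)
      (fun _ h => absurd h (Nat.not_lt_zero _)) hk)
    (fun _ => idS_apply_of_lt_one) hn b

theorem eq_compS_mulS_of_eq_mulS_compS [Algebra ℂ B] {β ρ u α δ δ' : FormalMulSeries B}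
    (hρ : IsMultilinearSeries ρ) (hδ : mulS u δ = oneS) (hδ' : compS α δ' = idS)
    (h : β = mulS (compS ρ α) u) : ρ = compS (mulS β δ) δ' := by
  rw [h, mulS_assoc, hδ, mulS_oneS, compS_assoc hρ, hδ', compS_idS_right hρ]

theorem eq_mulS_compS_compS_mulS [Algebra ℂ B] {β u α δ δ' : FormalMulSeries B}
    (hβδ : IsMultilinearSeries (mulS β δ)) (hδ : mulS δ u = oneS) (hδ' : compS δ' α = idS) :
    β = mulS (compS (compS (mulS β δ) δ') α) u := by
  rw [compS_assoc hβδ, hδ', compS_idS_right hβδ, mulS_assoc, hδ, mulS_oneS]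

end RTransform

theorem stmt_6 {B : Type*} [Ring B] [Algebra ℂ B] (β γ : FormalMulSeries B)
    (hβ : IsMultilinearSeries β) (hγ : IsMultilinearSeries γ) :
    -- (a) `1 + Iβ` has a (multilinear) inverse for the formal product
    (∃ δ : FormalMulSeries B, IsMultilinearSeries δ ∧ IsMulInvOf δ (oneS + mulS idS β)) ∧
    -- (b) `I + IγI` has a (multilinear) inverse for formal composition
    (∃ δ' : FormalMulSeries B, IsMultilinearSeries δ' ∧
        IsCompInvOf δ' (idS + mulS (mulS idS γ) idS)) ∧
    -- (c) existence and uniqueness of `ρ = ^cR_{β,γ}` in `Mul[[𝔅]]` with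
    --     `β = (ρ ∘ (I + IγI)) (1 + Iβ)`
    (∃! ρ : FormalMulSeries B, IsMultilinearSeries ρ ∧
        β = mulS (compS ρ (idS + mulS (mulS idS γ) idS)) (oneS + mulS idS β)) ∧
    -- ... namely `ρ = (β (1 + Iβ)⁻¹) ∘ (I + IγI)^⟨−1⟩`: any such inverses produce
    -- a solution of the defining equation (hence the unique `ρ` above).
    (∀ δ δ' : FormalMulSeries B, IsMulInvOf δ (oneS + mulS idS β) →
        IsCompInvOf δ' (idS + mulS (mulS idS γ) idS) →
        IsMultilinearSeries (compS (mulS β δ) δ') ∧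
        β = mulS (compS (compS (mulS β δ) δ') (idS + mulS (mulS idS γ) idS))
              (oneS + mulS idS β)) := by
  set u := oneS + mulS idS β
  set α := idS + mulS (mulS idS γ) idS
  have hu₀ (b : Fin 0 → B) : u 0 b = 1 := by simp [u, oneS, mulS_idS_left_apply_zero]
  have hα₀ (b : Fin 0 → B) : α 0 b = 0 := by
    simp [α, idS, mulS_mulS_idS_left_idS_apply_of_lt_two γ two_pos]
  have hα₁ (b : Fin 1 → B) : α 1 b = b 0 := by
    simp [α, idS_apply_one, mulS_mulS_idS_left_idS_apply_of_lt_two γ one_lt_two]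
  have hu : IsMultilinearSeries u := isMultilinearSeries_oneS.add (isMultilinearSeries_idS.mulS hβ)
  have hα : IsMultilinearSeries α :=
    isMultilinearSeries_idS.add ((isMultilinearSeries_idS.mulS hγ).mulS isMultilinearSeries_idS)
  have hβδ := hβ.mulS hu.mulInv
  have hρ := hβδ.compS hα.compInv
  have hsol := eq_mulS_compS_compS_mulS hβδ (mulInv_mulS hu₀) (compInv_compS hα hα₀ hα₁)
  refine ⟨⟨_, hu.mulInv, isMulInvOf_mulInv hu₀⟩, ⟨_, hα.compInv, isCompInvOf_compInv hα hα₀ hα₁⟩,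
    ⟨_, ⟨hρ, hsol⟩, fun ρ ⟨hρ', h⟩ => ?_⟩, fun δ δ' hδ hδ' => ?_⟩
  · exact eq_compS_mulS_of_eq_mulS_compS hρ' (mulS_mulInv hu₀) (compS_compInv hα₀ hα₁) h
  · rw [← eq_compS_mulS_of_eq_mulS_compS hρ hδ.1 hδ'.2.1 hsol]
    exact ⟨hρ, hsol⟩
end

section
/- Let 𝔅 be a unital C*-algebra and let ⟨·,·⟩ be a positive 𝔅-sesquilinear pairing on the 𝔅-bimodule 𝔅ξ𝔅. Then there exists a positive conditional expectation φ : 𝔅⟨ξ⟩ → 𝔅 such that φ(ξ b₁* b₂ ξ) = ⟨b₁ξ, b₂ξ⟩ for all b₁, b₂ ∈ 𝔅 (where b ξ denotes b ξ 1 ∈ 𝔅ξ𝔅). -/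
/-!
Realize `φ` as a vector state. On `E = 𝔅 ⊕ 𝔅ξ𝔅` the `𝔅`-valued form
`⟨(a, z), (a', z')⟩ = a* a' + ⟨z, z'⟩` is positive. Let `𝔅` act on `E` by left multiplication
and `ξ` by `(a, z) ↦ (⟨1ξ1, z⟩, 1ξa)`; this operator is symmetric because the pairing is
Hermitian, which follows from positivity by polarization. All these operators are adjointable
and commute with the right action of `𝔅`, so freeness of `ξ` yields a *-homomorphism `π` from
`𝔅⟨ξ⟩` into the adjointable operators, and `φ(p) = ⟨(1, 0), π(p)(1, 0)⟩` is a positive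
conditional expectation with `φ(ξ b₁* b₂ ξ) = ⟨1ξ1, b₁* b₂ξ1⟩ = ⟨b₁ξ, b₂ξ⟩`.
-/

open scoped TensorProduct

theorem LinearMap.star_apply_eq_of_isSelfAdjoint {E A : Type*} [AddCommGroup E] [Module ℂ E]
    [AddCommGroup A] [Module ℂ A] [StarAddMonoid A] [StarModule ℂ A]
    (f : E →ₗ⋆[ℂ] E →ₗ[ℂ] A) (hf : ∀ z, IsSelfAdjoint (f z z)) (z w : E) :
    star (f z w) = f w z := by
  have h₁ := (hf (z + w)).star_eq
  have h₂ := (hf (Complex.I • z + w)).star_eq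
  simp only [map_add, map_smulₛₗ, LinearMap.add_apply, LinearMap.smul_apply, star_add,
    star_smul, (hf z).star_eq, (hf w).star_eq, Complex.star_def, Complex.conj_I, map_neg,
    RingHom.id_apply] at h₁ h₂
  linear_combination (norm := match_scalars <;> ring_nf <;> simp [Complex.I_sq])
    (1 / 2 : ℂ) • h₁ - (Complex.I / 2) • h₂

section

variable {B E ι : Type*} [AddCommGroup B] [Module ℂ B] [AddCommGroup E] [Module ℂ E]

/-- The form may be degenerate, so adjoints need not be unique and are carried as data. -/
@[ext]
structure AdjointablePair (ip : E →ₗ⋆[ℂ] E →ₗ[ℂ] B) (r : ι → Module.End ℂ E) where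
  op : Module.End ℂ E
  adj : Module.End ℂ E
  apply_op_left : ∀ v w, ip (op v) w = ip v (adj w)
  apply_adj_left : ∀ v w, ip (adj v) w = ip v (op w)
  commute_op : ∀ i, Commute op (r i)
  commute_adj : ∀ i, Commute adj (r i)

namespace AdjointablePair

variable {ip : E →ₗ⋆[ℂ] E →ₗ[ℂ] B} {r : ι → Module.End ℂ E}

instance : Zero (AdjointablePair ip r) :=
  ⟨⟨0, 0, by simp, by simp, fun _ => .zero_left _, fun _ => .zero_left _⟩⟩

instance : One (AdjointablePair ip r) :=
  ⟨⟨1, 1, by simp, by simp, fun _ => .one_left _, fun _ => .one_left _⟩⟩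

instance : Add (AdjointablePair ip r) :=
  ⟨fun a b => ⟨a.op + b.op, a.adj + b.adj,
    by simp [a.apply_op_left, b.apply_op_left], by simp [a.apply_adj_left, b.apply_adj_left],
    fun i => (a.commute_op i).add_left (b.commute_op i),
    fun i => (a.commute_adj i).add_left (b.commute_adj i)⟩⟩

instance : Neg (AdjointablePair ip r) :=
  ⟨fun a => ⟨-a.op, -a.adj, by simp [a.apply_op_left], by simp [a.apply_adj_left],
    fun i => (a.commute_op i).neg_left, fun i => (a.commute_adj i).neg_left⟩⟩

instance : Mul (AdjointablePair ip r) :=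
  ⟨fun a b => ⟨a.op * b.op, b.adj * a.adj,
    by simp [a.apply_op_left, b.apply_op_left], by simp [a.apply_adj_left, b.apply_adj_left],
    fun i => (a.commute_op i).mul_left (b.commute_op i),
    fun i => (b.commute_adj i).mul_left (a.commute_adj i)⟩⟩

instance : SMul ℂ (AdjointablePair ip r) :=
  ⟨fun c a => ⟨c • a.op, star c • a.adj, by simp [a.apply_op_left], by simp [a.apply_adj_left],
    fun i => (a.commute_op i).smul_left c, fun i => (a.commute_adj i).smul_left _⟩⟩

instance : Star (AdjointablePair ip r) :=
  ⟨fun a => ⟨a.adj, a.op, a.apply_adj_left, a.apply_op_left, a.commute_adj, a.commute_op⟩⟩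

@[simp] lemma op_zero : (0 : AdjointablePair ip r).op = 0 := rfl
@[simp] lemma adj_zero : (0 : AdjointablePair ip r).adj = 0 := rfl
@[simp] lemma op_one : (1 : AdjointablePair ip r).op = 1 := rfl
@[simp] lemma adj_one : (1 : AdjointablePair ip r).adj = 1 := rfl
@[simp] lemma op_add (a b : AdjointablePair ip r) : (a + b).op = a.op + b.op := rfl
@[simp] lemma adj_add (a b : AdjointablePair ip r) : (a + b).adj = a.adj + b.adj := rfl
@[simp] lemma op_neg (a : AdjointablePair ip r) : (-a).op = -a.op := rfl
@[simp] lemma adj_neg (a : AdjointablePair ip r) : (-a).adj = -a.adj := rfl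
@[simp] lemma op_mul (a b : AdjointablePair ip r) : (a * b).op = a.op * b.op := rfl
@[simp] lemma adj_mul (a b : AdjointablePair ip r) : (a * b).adj = b.adj * a.adj := rfl
@[simp] lemma op_smul (c : ℂ) (a : AdjointablePair ip r) : (c • a).op = c • a.op := rfl
@[simp] lemma adj_smul (c : ℂ) (a : AdjointablePair ip r) : (c • a).adj = star c • a.adj := rfl
@[simp] lemma op_star (a : AdjointablePair ip r) : (star a).op = a.adj := rfl
@[simp] lemma adj_star (a : AdjointablePair ip r) : (star a).adj = a.op := rfl

instance : AddCommGroup (AdjointablePair ip r) where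
  add_assoc a b c := by ext1 <;> simp [add_assoc]
  zero_add a := by ext1 <;> simp
  add_zero a := by ext1 <;> simp
  add_comm a b := by ext1 <;> simp [add_comm]
  neg_add_cancel a := by ext1 <;> simp
  nsmul := nsmulRec
  zsmul := zsmulRec

instance : Ring (AdjointablePair ip r) where
  left_distrib a b c := by ext1 <;> simp [mul_add, add_mul]
  right_distrib a b c := by ext1 <;> simp [mul_add, add_mul]
  zero_mul a := by ext1 <;> simp
  mul_zero a := by ext1 <;> simp
  mul_assoc a b c := by ext1 <;> simp [mul_assoc]
  one_mul a := by ext1 <;> simp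
  mul_one a := by ext1 <;> simp

instance : Module ℂ (AdjointablePair ip r) where
  one_smul a := by ext1 <;> simp
  mul_smul c d a := by ext1 <;> simp [mul_smul]
  smul_zero c := by ext1 <;> simp
  smul_add c a b := by ext1 <;> simp
  add_smul c d a := by ext1 <;> simp [add_smul]
  zero_smul a := by ext1 <;> simp

instance : Algebra ℂ (AdjointablePair ip r) :=
  Algebra.ofModule (fun c a b => by ext1 <;> simp) (fun c a b => by ext1 <;> simp)

instance : StarRing (AdjointablePair ip r) where
  star_involutive _ := rfl
  star_mul _ _ := rfl
  star_add _ _ := rfl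

instance : StarModule ℂ (AdjointablePair ip r) :=
  ⟨fun _ _ => by ext1 <;> simp⟩

def opₗ : AdjointablePair ip r →ₗ[ℂ] Module.End ℂ E where
  toFun := op
  map_add' _ _ := rfl
  map_smul' _ _ := rfl

@[simp] lemma opₗ_apply (a : AdjointablePair ip r) : opₗ a = a.op := rfl

lemma apply_op_star_mul_self (a : AdjointablePair ip r) (v : E) :
    ip v ((star a * a).op v) = ip (a.op v) (a.op v) :=
  (a.apply_op_left v (a.op v)).symm

def ofSelfAdjoint (f : Module.End ℂ E) (hf : ∀ v w, ip (f v) w = ip v (f w))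
    (hr : ∀ i, Commute f (r i)) : AdjointablePair ip r :=
  ⟨f, f, hf, hf, hr, hr⟩

lemma star_ofSelfAdjoint (f : Module.End ℂ E) (hf : ∀ v w, ip (f v) w = ip v (f w))
    (hr : ∀ i, Commute f (r i)) : star (ofSelfAdjoint f hf hr) = ofSelfAdjoint f hf hr :=
  rfl

variable {A : Type*} [Ring A] [Algebra ℂ A] [StarRing A] [StarModule ℂ A]

def starAlgHomOfAlgHom (π : A →ₐ[ℂ] Module.End ℂ E)
    (hπ : ∀ a v w, ip (π a v) w = ip v (π (star a) w)) (hr : ∀ a i, Commute (π a) (r i)) :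
    A →⋆ₐ[ℂ] AdjointablePair ip r where
  toFun a := ⟨π a, π (star a), hπ a, fun v w => by simpa using hπ (star a) v w, hr a, hr (star a)⟩
  map_one' := by ext1 <;> simp
  map_mul' a b := by ext1 <;> simp
  map_zero' := by ext1 <;> simp
  map_add' a b := by ext1 <;> simp
  commutes' c := by ext1 <;> simp [Algebra.algebraMap_eq_smul_one]
  map_star' a := by ext1 <;> simp

end AdjointablePair

end

namespace BimodulePairing

variable {B : Type*} [Ring B] [Algebra ℂ B] (V : B ⊗[ℂ] B →ₗ⋆[ℂ] B ⊗[ℂ] B →ₗ[ℂ] B)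

def rightAction (c : B) : Module.End ℂ (B × B ⊗[ℂ] B) :=
  (LinearMap.mulRight ℂ c).prodMap ((LinearMap.mulRight ℂ c).lTensor B)

@[simp] lemma rightAction_apply (c : B) (v : B × B ⊗[ℂ] B) :
    rightAction c v = (v.1 * c, (LinearMap.mulRight ℂ c).lTensor B v.2) := rfl

lemma commute_lsmul_rightAction (b c : B) :
    Commute (Algebra.lsmul ℂ ℂ (B × B ⊗[ℂ] B) b) (rightAction c) := by
  have h := (LinearMap.lTensor_comp_rTensor B (.mulLeft ℂ b) (.mulRight ℂ c)).trans
    (LinearMap.rTensor_comp_lTensor B (.mulLeft ℂ b) (.mulRight ℂ c)).symm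
  refine LinearMap.ext fun ⟨a, z⟩ => ?_
  exact Prod.ext (mul_assoc b a c).symm (LinearMap.congr_fun h z).symm

lemma apply_lTensor_mulRight
    (hV : ∀ z (d₁ d₂ d : B), V z (d₁ ⊗ₜ (d₂ * d)) = V z (d₁ ⊗ₜ d₂) * d)
    (c : B) (z w : B ⊗[ℂ] B) : V z ((LinearMap.mulRight ℂ c).lTensor B w) = V z w * c := by
  have : V z ∘ₗ (LinearMap.mulRight ℂ c).lTensor B = LinearMap.mulRight ℂ c ∘ₗ V z :=
    TensorProduct.ext' fun d₁ d₂ => hV z d₁ d₂ c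
  exact LinearMap.congr_fun this w

def xiMap : Module.End ℂ (B × B ⊗[ℂ] B) :=
  (V (1 ⊗ₜ 1) ∘ₗ LinearMap.snd ℂ B _).prod (TensorProduct.mk ℂ B B 1 ∘ₗ LinearMap.fst ℂ B _)

@[simp] lemma xiMap_apply (v : B × B ⊗[ℂ] B) : xiMap V v = (V (1 ⊗ₜ 1) v.2, 1 ⊗ₜ v.1) := rfl

variable [StarRing B]

lemma apply_smul_left
    (hV : ∀ c b₁ b₂ d₁ d₂ : B, V ((c * b₁) ⊗ₜ b₂) (d₁ ⊗ₜ d₂) = V (b₁ ⊗ₜ b₂) ((star c * d₁) ⊗ₜ d₂))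
    (c : B) (z w : B ⊗[ℂ] B) : V (c • z) w = V z (star c • w) := by
  have : V ∘ₛₗ Algebra.lsmul ℂ ℂ (B ⊗[ℂ] B) c =
      V.compl₂ (Algebra.lsmul ℂ ℂ (B ⊗[ℂ] B) (star c)) :=
    TensorProduct.ext' fun b₁ b₂ => TensorProduct.ext' fun d₁ d₂ => hV c b₁ b₂ d₁ d₂
  exact LinearMap.congr_fun (LinearMap.congr_fun this z) w

variable [StarModule ℂ B]

def sumPairing : B × B ⊗[ℂ] B →ₗ⋆[ℂ] B × B ⊗[ℂ] B →ₗ[ℂ] B :=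
  ((LinearMap.mul ℂ B ∘ₛₗ (starLinearEquiv ℂ).toLinearMap) ∘ₛₗ LinearMap.fst ℂ B _).compl₂
      (LinearMap.fst ℂ B _) +
    (V ∘ₛₗ LinearMap.snd ℂ B _).compl₂ (LinearMap.snd ℂ B _)

@[simp] lemma sumPairing_apply (v w : B × B ⊗[ℂ] B) :
    sumPairing V v w = star v.1 * w.1 + V v.2 w.2 := rfl

lemma sumPairing_one_zero_left (v : B × B ⊗[ℂ] B) : sumPairing V (1, 0) v = v.1 := by
  simp

structure IsBimodulePairing : Prop where
  apply_tmul_mul_left : ∀ (b₁ b₂ c : B) w, V (b₁ ⊗ₜ (b₂ * c)) w = star c * V (b₁ ⊗ₜ b₂) w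
  apply_tmul_mul_right : ∀ z (d₁ d₂ d : B), V z (d₁ ⊗ₜ (d₂ * d)) = V z (d₁ ⊗ₜ d₂) * d
  apply_mul_tmul : ∀ c b₁ b₂ d₁ d₂ : B,
    V ((c * b₁) ⊗ₜ b₂) (d₁ ⊗ₜ d₂) = V (b₁ ⊗ₜ b₂) ((star c * d₁) ⊗ₜ d₂)

variable {V}

def leftAction (hV : IsBimodulePairing V) :
    B →⋆ₐ[ℂ] AdjointablePair (sumPairing V) rightAction :=
  AdjointablePair.starAlgHomOfAlgHom (Algebra.lsmul ℂ ℂ _)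
    (fun b v w => by simp [apply_smul_left V hV.apply_mul_tmul, star_mul, mul_assoc])
    commute_lsmul_rightAction

@[simp] lemma leftAction_op_apply (hV : IsBimodulePairing V) (b : B) (v : B × B ⊗[ℂ] B) :
    (leftAction hV b).op v = b • v := rfl

def xi (hV : IsBimodulePairing V) (hsymm : ∀ z w, star (V z w) = V w z) :
    AdjointablePair (sumPairing V) rightAction :=
  .ofSelfAdjoint (xiMap V)
    (fun v w => by
      have h₁ := hV.apply_tmul_mul_left 1 1 v.1 w.2
      have h₂ := hV.apply_tmul_mul_right v.2 1 1 w.1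
      rw [one_mul] at h₁ h₂
      simp [hsymm, h₁, h₂, add_comm])
    (fun c => LinearMap.ext fun ⟨a, z⟩ =>
      Prod.ext (apply_lTensor_mulRight V hV.apply_tmul_mul_right c _ z) rfl)

@[simp] lemma xi_op (hV : IsBimodulePairing V) (hsymm : ∀ z w, star (V z w) = V w z) :
    (xi hV hsymm).op = xiMap V :=
  rfl

lemma star_xi (hV : IsBimodulePairing V) (hsymm : ∀ z w, star (V z w) = V w z) :
    star (xi hV hsymm) = xi hV hsymm :=
  AdjointablePair.star_ofSelfAdjoint ..

variable (V) in
def vectorState : AdjointablePair (sumPairing V) rightAction →ₗ[ℂ] B :=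
  sumPairing V (1, 0) ∘ₗ LinearMap.applyₗ (1, 0) ∘ₗ AdjointablePair.opₗ

lemma vectorState_apply (a : AdjointablePair (sumPairing V) rightAction) :
    vectorState V a = (a.op (1, 0)).1 :=
  sumPairing_one_zero_left V _

lemma vectorState_leftAction (hV : IsBimodulePairing V) (b : B) :
    vectorState V (leftAction hV b) = b := by
  simp [vectorState_apply]

lemma vectorState_leftAction_mul_mul (hV : IsBimodulePairing V) (b b' : B)
    (a : AdjointablePair (sumPairing V) rightAction) :
    vectorState V (leftAction hV b * a * leftAction hV b') = b * vectorState V a * b' := by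
  have h : (leftAction hV b').op (1, 0) = rightAction b' (1, 0) := by simp
  have hcomm := LinearMap.congr_fun (a.commute_op b').eq (1, 0)
  simp only [Module.End.mul_apply] at hcomm
  simp only [vectorState_apply, AdjointablePair.op_mul, Module.End.mul_apply]
  rw [h, hcomm]
  simp [mul_assoc]

lemma vectorState_star_mul_self_nonneg [PartialOrder B] [StarOrderedRing B]
    (hpos : ∀ z, 0 ≤ V z z) (a : AdjointablePair (sumPairing V) rightAction) :
    0 ≤ vectorState V (star a * a) := by
  simp only [vectorState, LinearMap.comp_apply, LinearMap.applyₗ_apply_apply,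
    AdjointablePair.opₗ_apply, AdjointablePair.apply_op_star_mul_self]
  exact add_nonneg (star_mul_self_nonneg _) (hpos _)

lemma vectorState_xi_mul_leftAction_mul_xi (hV : IsBimodulePairing V)
    (hsymm : ∀ z w, star (V z w) = V w z) (b₁ b₂ : B) :
    vectorState V (xi hV hsymm * leftAction hV (star b₁ * b₂) * xi hV hsymm) =
      V (b₁ ⊗ₜ 1) (b₂ ⊗ₜ 1) := by
  simpa [vectorState_apply, TensorProduct.smul_tmul'] using
    (hV.apply_mul_tmul b₁ 1 1 b₂ 1).symm

end BimodulePairing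

open BimodulePairing

theorem stmt_14_general {B P : Type u}
    [CStarAlgebra B] [PartialOrder B] [StarOrderedRing B]
    [Ring P] [Algebra ℂ P] [StarRing P]
    -- `P = 𝔅⟨ξ⟩`, with `x` playing the role of `ξ`:
    (ιP : B →⋆ₐ[ℂ] P)
    (x : P)
    (hUP : ∀ (C : Type u) [Ring C] [Algebra ℂ C] [StarRing C] [StarModule ℂ C],
      ∀ (f : B →⋆ₐ[ℂ] C) (y : C), star y = y →
        ∃ g : P →⋆ₐ[ℂ] C, g.comp ιP = f ∧ g x = y)
    -- `V = ⟨·,·⟩` is a positive `𝔅`-sesquilinear pairing on `𝔅ξ𝔅 = 𝔅 ⊗_ℂ 𝔅`: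
    (V : B ⊗[ℂ] B → B ⊗[ℂ] B → B)
    (haddl : ∀ z z' w, V (z + z') w = V z w + V z' w)
    (haddr : ∀ z w w', V z (w + w') = V z w + V z w')
    (hsmull : ∀ (c : ℂ) z w, V (c • z) w = (starRingEnd ℂ) c • V z w)
    (hsmulr : ∀ (c : ℂ) z w, V z (c • w) = c • V z w)
    -- `⟨z c, w⟩ = c* ⟨z, w⟩` and `⟨z, w d⟩ = ⟨z, w⟩ d` (right module actions):
    (hractl : ∀ (b₁ b₂ c : B) (w : B ⊗[ℂ] B),
      V (b₁ ⊗ₜ[ℂ] (b₂ * c)) w = star c * V (b₁ ⊗ₜ[ℂ] b₂) w)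
    (hractr : ∀ (z : B ⊗[ℂ] B) (d₁ d₂ d : B),
      V z (d₁ ⊗ₜ[ℂ] (d₂ * d)) = V z (d₁ ⊗ₜ[ℂ] d₂) * d)
    -- `⟨c z, w⟩ = ⟨z, c* w⟩` (left module action):
    (hlact : ∀ (c b₁ b₂ d₁ d₂ : B),
      V ((c * b₁) ⊗ₜ[ℂ] b₂) (d₁ ⊗ₜ[ℂ] d₂) = V (b₁ ⊗ₜ[ℂ] b₂) ((star c * d₁) ⊗ₜ[ℂ] d₂))
    -- positivity of the pairing:
    (hpos : ∀ z : B ⊗[ℂ] B, 0 ≤ V z z) :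
    -- conclusion: a positive conditional expectation `φ : 𝔅⟨ξ⟩ → 𝔅` with
    -- `φ(ξ b₁* b₂ ξ) = ⟨b₁ξ, b₂ξ⟩`:
    ∃ φ : P →ₗ[ℂ] B,
      (∀ (b b' : B) (p : P), φ (ιP b * p * ιP b') = b * φ p * b') ∧
      (∀ b : B, φ (ιP b) = b) ∧
      (∀ p : P, 0 ≤ φ (star p * p)) ∧
      (∀ b₁ b₂ : B,
        φ (x * ιP (star b₁ * b₂) * x) = V (b₁ ⊗ₜ[ℂ] 1) (b₂ ⊗ₜ[ℂ] 1)) := by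
  let Vₗ : B ⊗[ℂ] B →ₗ⋆[ℂ] B ⊗[ℂ] B →ₗ[ℂ] B :=
    LinearMap.mk₂'ₛₗ (starRingEnd ℂ) (RingHom.id ℂ) V haddl hsmull haddr hsmulr
  have hV : IsBimodulePairing Vₗ := ⟨hractl, hractr, hlact⟩
  have hsymm := Vₗ.star_apply_eq_of_isSelfAdjoint fun z => IsSelfAdjoint.of_nonneg (hpos z)
  obtain ⟨π, hπι, hπx⟩ := hUP _ (leftAction hV) (xi hV hsymm) (star_xi hV hsymm)
  have hπ (b : B) : π (ιP b) = leftAction hV b := DFunLike.congr_fun hπι b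
  refine ⟨vectorState Vₗ ∘ₗ π.toLinearMap, fun b b' p => ?_, fun b => ?_, fun p => ?_,
    fun b₁ b₂ => ?_⟩
  · have h := vectorState_leftAction_mul_mul hV b b' (π p)
    rw [← hπ, ← hπ, ← map_mul, ← map_mul] at h
    exact h
  · have h := vectorState_leftAction hV b
    rw [← hπ] at h
    exact h
  · have h := vectorState_star_mul_self_nonneg hpos (π p)
    rw [← map_star, ← map_mul] at h
    exact h
  · have h := vectorState_xi_mul_leftAction_mul_xi hV hsymm b₁ b₂
    rw [← hπ, ← hπx, ← map_mul, ← map_mul] at h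
    exact h

theorem stmt_14 {B P : Type u}
    [CStarAlgebra B] [PartialOrder B] [StarOrderedRing B]
    [Ring P] [Algebra ℂ P] [StarRing P] [StarModule ℂ P]
    -- `P = 𝔅⟨ξ⟩`, with `x` playing the role of `ξ`:
    (ιP : B →⋆ₐ[ℂ] P) (hι : Function.Injective ιP)
    (x : P) (hx : star x = x)
    (hgen : StarAlgebra.adjoin ℂ (Set.range ιP ∪ {x}) = ⊤)
    (hUP : ∀ (C : Type u) [Ring C] [Algebra ℂ C] [StarRing C] [StarModule ℂ C],
      ∀ (f : B →⋆ₐ[ℂ] C) (y : C), star y = y →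
        ∃ g : P →⋆ₐ[ℂ] C, g.comp ιP = f ∧ g x = y)
    -- `V = ⟨·,·⟩` is a positive `𝔅`-sesquilinear pairing on `𝔅ξ𝔅 = 𝔅 ⊗_ℂ 𝔅`:
    (V : B ⊗[ℂ] B → B ⊗[ℂ] B → B)
    (haddl : ∀ z z' w, V (z + z') w = V z w + V z' w)
    (haddr : ∀ z w w', V z (w + w') = V z w + V z w')
    (hsmull : ∀ (c : ℂ) z w, V (c • z) w = (starRingEnd ℂ) c • V z w)
    (hsmulr : ∀ (c : ℂ) z w, V z (c • w) = c • V z w)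
    -- `⟨z c, w⟩ = c* ⟨z, w⟩` and `⟨z, w d⟩ = ⟨z, w⟩ d` (right module actions):
    (hractl : ∀ (b₁ b₂ c : B) (w : B ⊗[ℂ] B),
      V (b₁ ⊗ₜ[ℂ] (b₂ * c)) w = star c * V (b₁ ⊗ₜ[ℂ] b₂) w)
    (hractr : ∀ (z : B ⊗[ℂ] B) (d₁ d₂ d : B),
      V z (d₁ ⊗ₜ[ℂ] (d₂ * d)) = V z (d₁ ⊗ₜ[ℂ] d₂) * d)
    -- `⟨c z, w⟩ = ⟨z, c* w⟩` (left module action):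
    (hlact : ∀ (c b₁ b₂ d₁ d₂ : B),
      V ((c * b₁) ⊗ₜ[ℂ] b₂) (d₁ ⊗ₜ[ℂ] d₂) = V (b₁ ⊗ₜ[ℂ] b₂) ((star c * d₁) ⊗ₜ[ℂ] d₂))
    -- positivity of the pairing:
    (hpos : ∀ z : B ⊗[ℂ] B, 0 ≤ V z z) :
    -- conclusion: a positive conditional expectation `φ : 𝔅⟨ξ⟩ → 𝔅` with
    -- `φ(ξ b₁* b₂ ξ) = ⟨b₁ξ, b₂ξ⟩`:
    ∃ φ : P →ₗ[ℂ] B,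
      (∀ (b b' : B) (p : P), φ (ιP b * p * ιP b') = b * φ p * b') ∧
      (∀ b : B, φ (ιP b) = b) ∧
      (∀ p : P, 0 ≤ φ (star p * p)) ∧
      (∀ b₁ b₂ : B,
        φ (x * ιP (star b₁ * b₂) * x) = V (b₁ ⊗ₜ[ℂ] 1) (b₂ ⊗ₜ[ℂ] 1)) :=
  stmt_14_general ιP x hUP V haddl haddr hsmull hsmulr hractl hractr hlact hpos
end

section
/- Let 𝔅 be a unital C*-algebra and ⟨·,·⟩ a positive 𝔅-sesquilinear pairing on 𝔅ξ𝔅. Define a pairing ⟨·,·⟩_F on 𝔅⟨ξ⟩ = ⨁_{n≥0} 𝔅^{⊗(n+1)} by: ⟨a, b⟩_F = a*b for a, b ∈ 𝔅; ⟨p, q⟩_F = 0 for homogeneous p, q of different ξ-degree; and ⟨a₁ ξ u, b₁ ξ v⟩_F = ⟨u, ⟨a₁ξ, b₁ξ⟩ · v⟩_F for a₁, b₁ ∈ 𝔅 and u, v homogeneous of equal ξ-degree (the dot being left multiplication in 𝔅⟨ξ⟩). Let A₁, A₂ : 𝔅⟨ξ⟩ → 𝔅⟨ξ⟩ be the right-𝔅-linear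 maps with A₁(p) = ξp, A₂(b) = 0 for b ∈ 𝔅, and A₂(b₀ ξ u) = ⟨ξ, b₀ξ⟩ · u on monomials. Then (i) ⟨A₁ p, q⟩_F = ⟨p, A₂ q⟩_F for all p, q ∈ 𝔅⟨ξ⟩, so S = A₁ + A₂ is selfadjoint for ⟨·,·⟩_F, and (ii) ⟨1, S(a*b · S(1))⟩_F = ⟨aξ, bξ⟩ for all a, b ∈ 𝔅. -/
open scoped TensorProduct

/-!
STATEMENT 15: Let `𝔅` be a unital C*-algebra and `⟨·,·⟩` a positive `𝔅`-sesquilinear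
pairing on `𝔅ξ𝔅 = 𝔅 ⊗_ℂ 𝔅`.  On `𝔅⟨ξ⟩` (realized as the full Fock bimodule
`𝔅 ⊕ ⨁_{n≥1} (𝔅ξ𝔅)^{⊗_𝔅 n}`), consider the pairing `⟨·,·⟩_F` with `⟨a, b⟩_F = a*b` on
`𝔅`, vanishing on homogeneous elements of different `ξ`-degree, and
`⟨a₁ξu, b₁ξv⟩_F = ⟨u, ⟨a₁ξ, b₁ξ⟩·v⟩_F`; let `A₁ p = ξp` (creation) and `A₂` be the
right-`𝔅`-linear annihilation operator (`A₂ b = 0` on `𝔅`, `A₂(b₀ξu) = ⟨ξ, b₀ξ⟩·u`).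
Then (i) `⟨A₁p, q⟩_F = ⟨p, A₂q⟩_F` for all `p, q`, so `S = A₁ + A₂` is selfadjoint for
`⟨·,·⟩_F`, and (ii) `⟨1, S(a*b·S(1))⟩_F = ⟨aξ, bξ⟩` for all `a, b ∈ 𝔅`.

`𝔅⟨ξ⟩` is encoded as a unital *-algebra `P` containing `𝔅` via `ιP`, with a
selfadjoint generator `x` (the indeterminate `ξ`) subject to the universal property
`hUP` (freeness).  The monomial `b₀ξb₁ξ⋯ξbₙ` of `ξ`-degree `n` is `mon ιP x n b`;
`⟨·,·⟩_F` and `A₂` are encoded as given data `F`, `A2`, characterized on monomials by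
the hypotheses below (which determine them, by sesquilinearity and generation).
-/

/-- The monomial `b₀ ξ b₁ ξ ⋯ ξ bₙ` (of `ξ`-degree `n`) in `𝔅⟨ξ⟩`. -/
def mon {B P : Type*} [CStarAlgebra B] [Ring P] [Algebra ℂ P] [StarRing P]
    [StarModule ℂ P] (ιP : B →⋆ₐ[ℂ] P) (x : P) (n : ℕ) (b : Fin (n + 1) → B) : P :=
  (List.ofFn fun i : Fin n => ιP (b i.castSucc) * x).prod * ιP (b (Fin.last n))

section aux
variable {B P : Type*} [CStarAlgebra B] [Ring P] [Algebra ℂ P] [StarRing P]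
    [StarModule ℂ P] (ιP : B →⋆ₐ[ℂ] P) (x : P)

lemma mon_zero (b : Fin 1 → B) : mon ιP x 0 b = ιP (b 0) := by
  simp [mon]

lemma mon_succ (n : ℕ) (b : Fin (n + 2) → B) :
    mon ιP x (n + 1) b = ιP (b 0) * x * mon ιP x n (fun i => b i.succ) := by
  simp only [mon, List.ofFn_succ, List.prod_cons, Fin.castSucc_zero, Fin.succ_last,
    Fin.succ_castSucc, mul_assoc]

lemma iota_mul_mon (c : B) (n : ℕ) (b : Fin (n + 1) → B) :
    ιP c * mon ιP x n b = mon ιP x n (fun i => if i = 0 then c * b i else b i) := by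
  cases n with
  | zero => simp [mon_zero]
  | succ n =>
    rw [mon_succ, mon_succ]
    have : (fun i : Fin (n + 1) =>
        if (i.succ : Fin (n + 2)) = 0 then c * b i.succ else b i.succ) = fun i => b i.succ := by
      funext i
      rw [if_neg (Fin.succ_ne_zero i)]
    rw [this, if_pos rfl, map_mul, ← mul_assoc, ← mul_assoc]

lemma x_mul_mon (n : ℕ) (b : Fin (n + 1) → B) :
    x * mon ιP x n b = mon ιP x (n + 1) (Fin.cons 1 b) := by
  rw [mon_succ]
  simp only [Fin.cons_zero, Fin.cons_succ, map_one, one_mul]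

lemma mon_mul_x (n : ℕ) (b : Fin (n + 1) → B) :
    mon ιP x n b * x = mon ιP x (n + 1) (Fin.snoc b 1) := by
  induction n with
  | zero =>
    have h0 : (Fin.snoc b 1 : Fin 2 → B) 0 = b 0 := by
      rw [show (0 : Fin 2) = Fin.castSucc 0 from rfl, Fin.snoc_castSucc]
    have h1 : (Fin.snoc b 1 : Fin 2 → B) ((0 : Fin 1).succ) = 1 := by
      rw [show ((0 : Fin 1).succ : Fin 2) = Fin.last 1 from rfl, Fin.snoc_last]
    rw [mon_zero, mon_succ, mon_zero, h0, h1, map_one, mul_one]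
  | succ n ih =>
    have h0 : (Fin.snoc b 1 : Fin (n + 3) → B) 0 = b 0 := by
      rw [show (0 : Fin (n + 3)) = Fin.castSucc 0 from rfl, Fin.snoc_castSucc]
    have hsnoc : (fun i : Fin (n + 2) => (Fin.snoc b 1 : Fin (n + 3) → B) i.succ)
        = Fin.snoc (fun i : Fin (n + 1) => b i.succ) 1 := by
      funext i
      refine Fin.lastCases ?_ (fun j => ?_) i
      · rw [Fin.succ_last, Fin.snoc_last, Fin.snoc_last]
      · rw [Fin.succ_castSucc, Fin.snoc_castSucc, Fin.snoc_castSucc]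
    rw [mon_succ ιP x n b, mul_assoc (ιP (b 0) * x), ih,
      mon_succ ιP x (n + 1) (Fin.snoc b 1), h0, hsnoc]

lemma mon_mul_mon (n m : ℕ) (b : Fin (n + 1) → B) (c : Fin (m + 1) → B) :
    ∃ (k : ℕ) (d : Fin (k + 1) → B), mon ιP x n b * mon ιP x m c = mon ιP x k d := by
  induction n with
  | zero =>
    rw [mon_zero, iota_mul_mon]
    exact ⟨m, _, rfl⟩
  | succ n ih =>
    obtain ⟨k, d, hd⟩ := ih (fun i => b i.succ)
    rw [mon_succ ιP x n b, mul_assoc (ιP (b 0) * x), hd, mul_assoc, x_mul_mon, iota_mul_mon]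
    exact ⟨k + 1, _, rfl⟩

end aux

lemma star_V {B M : Type*} [CStarAlgebra B] [PartialOrder B] [StarOrderedRing B]
    [AddCommGroup M] [Module ℂ M]
    (V : M → M → B)
    (haddl : ∀ z z' w, V (z + z') w = V z w + V z' w)
    (haddr : ∀ z w w', V z (w + w') = V z w + V z w')
    (hsmull : ∀ (c : ℂ) z w, V (c • z) w = (starRingEnd ℂ) c • V z w)
    (hsmulr : ∀ (c : ℂ) z w, V z (c • w) = c • V z w)
    (hpos : ∀ z : M, 0 ≤ V z z) (z w : M) : star (V z w) = V w z := by
  have hsa : ∀ u : M, star (V u u) = V u u := fun u =>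
    (IsSelfAdjoint.of_nonneg (hpos u)).star_eq
  have expand : ∀ u v : M, V (u + v) (u + v) = V u u + V u v + V v u + V v v := by
    intro u v
    rw [haddl, haddr, haddr]
    abel
  -- first polarization identity
  have h1 := hsa (z + w)
  rw [expand, star_add, star_add, star_add, hsa z, hsa w] at h1
  have hA : star (V z w) + star (V w z) = V z w + V w z := by
    have h1' := add_right_cancel h1
    rw [add_assoc, add_assoc] at h1'
    exact add_left_cancel h1'
  -- second polarization identity
  have h2 := hsa (z + Complex.I • w)
  rw [expand, hsmulr Complex.I z w, hsmull Complex.I w z,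
    hsmull Complex.I w (Complex.I • w), hsmulr Complex.I w w, smul_smul,
    Complex.conj_I, show (-Complex.I * Complex.I : ℂ) = 1 by simp [Complex.I_mul_I],
    one_smul, star_add, star_add, star_add, hsa z, hsa w, star_smul, star_smul] at h2
  simp only [Complex.star_def, Complex.conj_I, Complex.conj_neg_I] at h2
  have hB' : (-Complex.I) • star (V z w) + Complex.I • star (V w z)
      = Complex.I • V z w + (-Complex.I) • V w z := by
    have h2' := add_right_cancel h2
    rw [add_assoc, add_assoc] at h2'
    exact add_left_cancel h2'
  have hB : star (V w z) - star (V z w) = V z w - V w z := by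
    have h := congrArg (fun v => (-Complex.I) • v) hB'
    simp only [smul_add, smul_neg, smul_smul, neg_mul, neg_neg, Complex.I_mul_I, neg_smul,
      one_smul] at h
    rw [neg_add_eq_sub, ← sub_eq_add_neg] at h
    exact h
  have key : star (V w z) = V z w := by
    have e1 : star (V w z) + star (V w z) = V z w + V z w := by
      calc star (V w z) + star (V w z)
          = (star (V z w) + star (V w z)) + (star (V w z) - star (V z w)) := by abel
        _ = (V z w + V w z) + (V z w - V w z) := by rw [hA, hB]
        _ = V z w + V z w := by abel
    have e2 : (2 : ℂ) • star (V w z) = (2 : ℂ) • V z w := by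
      rw [two_smul, two_smul]; exact e1
    exact smul_right_injective B two_ne_zero e2
  rw [← key, star_star]

theorem stmt_15 {B P : Type u}
    [CStarAlgebra B] [PartialOrder B] [StarOrderedRing B]
    [Ring P] [Algebra ℂ P] [StarRing P] [StarModule ℂ P]
    -- `P = 𝔅⟨ξ⟩`, with `x` playing the role of `ξ`:
    (ιP : B →⋆ₐ[ℂ] P) (hι : Function.Injective ιP)
    (x : P) (hx : star x = x)
    (hgen : StarAlgebra.adjoin ℂ (Set.range ιP ∪ {x}) = ⊤)
    (hUP : ∀ (C : Type u) [Ring C] [Algebra ℂ C] [StarRing C] [StarModule ℂ C],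
      ∀ (f : B →⋆ₐ[ℂ] C) (y : C), star y = y →
        ∃ g : P →⋆ₐ[ℂ] C, g.comp ιP = f ∧ g x = y)
    -- `V = ⟨·,·⟩` is a positive `𝔅`-sesquilinear pairing on `𝔅ξ𝔅 = 𝔅 ⊗_ℂ 𝔅`:
    (V : B ⊗[ℂ] B → B ⊗[ℂ] B → B)
    (haddl : ∀ z z' w, V (z + z') w = V z w + V z' w)
    (haddr : ∀ z w w', V z (w + w') = V z w + V z w')
    (hsmull : ∀ (c : ℂ) z w, V (c • z) w = (starRingEnd ℂ) c • V z w)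
    (hsmulr : ∀ (c : ℂ) z w, V z (c • w) = c • V z w)
    (hractl : ∀ (b₁ b₂ c : B) (w : B ⊗[ℂ] B),
      V (b₁ ⊗ₜ[ℂ] (b₂ * c)) w = star c * V (b₁ ⊗ₜ[ℂ] b₂) w)
    (hractr : ∀ (z : B ⊗[ℂ] B) (d₁ d₂ d : B),
      V z (d₁ ⊗ₜ[ℂ] (d₂ * d)) = V z (d₁ ⊗ₜ[ℂ] d₂) * d)
    (hlact : ∀ (c b₁ b₂ d₁ d₂ : B),
      V ((c * b₁) ⊗ₜ[ℂ] b₂) (d₁ ⊗ₜ[ℂ] d₂) = V (b₁ ⊗ₜ[ℂ] b₂) ((star c * d₁) ⊗ₜ[ℂ] d₂))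
    (hpos : ∀ z : B ⊗[ℂ] B, 0 ≤ V z z)
    -- `F = ⟨·,·⟩_F` is the induced (Fock) pairing on `𝔅⟨ξ⟩`, characterized by
    -- sesquilinearity and its values on monomials:
    (F : P → P → B)
    (hFaddl : ∀ p p' q, F (p + p') q = F p q + F p' q)
    (hFaddr : ∀ p q q', F p (q + q') = F p q + F p q')
    (hFsmull : ∀ (c : ℂ) p q, F (c • p) q = (starRingEnd ℂ) c • F p q)
    (hFsmulr : ∀ (c : ℂ) p q, F p (c • q) = c • F p q)
    -- `⟨a, b⟩_F = a* b` for `a, b ∈ 𝔅`: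
    (hF0 : ∀ a b : B, F (ιP a) (ιP b) = star a * b)
    -- homogeneous elements of different `ξ`-degree pair to `0`:
    (hFdeg : ∀ (n m : ℕ), n ≠ m → ∀ (a : Fin (n + 1) → B) (b : Fin (m + 1) → B),
      F (mon ιP x n a) (mon ιP x m b) = 0)
    -- the recursion `⟨a₀ξu, b₀ξv⟩_F = ⟨u, ⟨a₀ξ, b₀ξ⟩ · v⟩_F`:
    (hFrec : ∀ (a₀ b₀ : B) (n m : ℕ) (a : Fin (n + 1) → B) (b : Fin (m + 1) → B),
      F (ιP a₀ * x * mon ιP x n a) (ιP b₀ * x * mon ιP x m b)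
        = F (mon ιP x n a) (ιP (V (a₀ ⊗ₜ[ℂ] 1) (b₀ ⊗ₜ[ℂ] 1)) * mon ιP x m b))
    -- `A₂` is the right-`𝔅`-linear annihilation operator:
    (A2 : P → P)
    (hA2add : ∀ p q, A2 (p + q) = A2 p + A2 q)
    (hA2ract : ∀ (p : P) (b : B), A2 (p * ιP b) = A2 p * ιP b)
    (hA2B : ∀ b : B, A2 (ιP b) = 0)
    (hA2mon : ∀ (b₀ : B) (n : ℕ) (c : Fin (n + 1) → B),
      A2 (ιP b₀ * x * mon ιP x n c)
        = ιP (V ((1 : B) ⊗ₜ[ℂ] 1) (b₀ ⊗ₜ[ℂ] 1)) * mon ιP x n c) :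
    -- (i) `A₁ = x * ·` and `A₂` are adjoint to each other for `⟨·,·⟩_F`, hence
    --     `S = A₁ + A₂` is selfadjoint:
    (∀ p q : P, F (x * p) q = F p (A2 q)) ∧
    (∀ p q : P, F (x * p + A2 p) q = F p (x * q + A2 q)) ∧
    -- (ii) `⟨1, S(a* b · S(1))⟩_F = ⟨aξ, bξ⟩`:
    (∀ a b : B,
      F 1 (x * (ιP (star a * b) * (x * 1 + A2 1)) + A2 (ιP (star a * b) * (x * 1 + A2 1)))
        = V (a ⊗ₜ[ℂ] 1) (b ⊗ₜ[ℂ] 1)) := by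
  -- the span of monomials
  classical
  have hmem : ∀ p : P, p ∈ Submodule.span ℂ
      {p : P | ∃ (n : ℕ) (b : Fin (n + 1) → B), p = mon ιP x n b} := by
    set S : Set P := {p : P | ∃ (n : ℕ) (b : Fin (n + 1) → B), p = mon ιP x n b} with hS
    have hmul : ∀ p ∈ Submodule.span ℂ S, ∀ q ∈ Submodule.span ℂ S,
        p * q ∈ Submodule.span ℂ S := by
      intro p hp q hq
      induction hp, hq using Submodule.span_induction₂ with
      | mem_mem p q hp hq =>
        obtain ⟨n, a, rfl⟩ := hp
        obtain ⟨m, b, rfl⟩ := hq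
        obtain ⟨k, d, hd⟩ := mon_mul_mon ιP x n m a b
        rw [hd]
        exact Submodule.subset_span ⟨k, d, rfl⟩
      | zero_left q hq => rw [zero_mul]; exact Submodule.zero_mem _
      | zero_right p hp => rw [mul_zero]; exact Submodule.zero_mem _
      | add_left p q r hp hq hr ih1 ih2 => rw [add_mul]; exact Submodule.add_mem _ ih1 ih2
      | add_right p q r hp hq hr ih1 ih2 => rw [mul_add]; exact Submodule.add_mem _ ih1 ih2
      | smul_left c p q hp hq ih => rw [smul_mul_assoc]; exact Submodule.smul_mem _ _ ih
      | smul_right c p q hp hq ih => rw [mul_smul_comm]; exact Submodule.smul_mem _ _ ih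
    intro p
    have htop : (StarAlgebra.adjoin ℂ (Set.range ιP ∪ {x})).toSubalgebra
        = (⊤ : StarSubalgebra ℂ P).toSubalgebra := by rw [hgen]
    rw [StarAlgebra.adjoin_toSubalgebra] at htop
    have hp : p ∈ Algebra.adjoin ℂ
        ((Set.range ιP ∪ {x}) ∪ star (Set.range ιP ∪ {x})) := by
      rw [htop]; trivial
    have hxS : x ∈ S := by
      refine ⟨1, fun _ => 1, ?_⟩
      rw [mon_succ, mon_zero, map_one, one_mul, mul_one]
    have hgenS : ∀ y ∈ (Set.range ιP ∪ {x}) ∪ star (Set.range ιP ∪ {x}), y ∈ S := by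
      rintro y (hy | hy)
      · rcases hy with ⟨b, rfl⟩ | rfl
        · exact ⟨0, fun _ => b, (mon_zero ιP x (fun _ => b)).symm⟩
        · exact hxS
      · rw [Set.mem_star] at hy
        rcases hy with ⟨b, hb⟩ | hb
        · have hyb : y = ιP (star b) := by rw [map_star, hb, star_star]
          rw [hyb]
          exact ⟨0, fun _ => star b, (mon_zero ιP x (fun _ => star b)).symm⟩
        · have hyx : y = x := by
            rw [show y = star (star y) from (star_star y).symm, Set.mem_singleton_iff.mp hb, hx]
          rw [hyx]; exact hxS
    induction hp using Algebra.adjoin_induction with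
    | mem y hy => exact Submodule.subset_span (hgenS y hy)
    | algebraMap r =>
      rw [Algebra.algebraMap_eq_smul_one]
      refine Submodule.smul_mem _ _ (Submodule.subset_span ?_)
      rw [← map_one ιP]
      exact ⟨0, fun _ => 1, (mon_zero ιP x (fun _ => 1)).symm⟩
    | add u v hu hv ih1 ih2 => exact Submodule.add_mem _ ih1 ih2
    | mul u v hu hv ih1 ih2 => exact hmul u ih1 v ih2
  -- basic consequences of additivity
  have hF0r : ∀ p : P, F p 0 = 0 := by
    intro p
    have h := hFaddr p 0 0
    rw [add_zero] at h
    exact (left_eq_add.mp h)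
  have hF0l : ∀ q : P, F 0 q = 0 := by
    intro q
    have h := hFaddl 0 0 q
    rw [add_zero] at h
    exact (left_eq_add.mp h)
  have hA20 : A2 (0 : P) = 0 := by
    have h := hA2add 0 0
    rw [add_zero] at h
    exact (left_eq_add.mp h)
  have hA2smul : ∀ (c : ℂ) (p : P), A2 (c • p) = c • A2 p := by
    intro c p
    have hsm : ∀ q : P, c • q = q * ιP (algebraMap ℂ B c) := by
      intro q
      rw [AlgHomClass.commutes ιP c, Algebra.algebraMap_eq_smul_one, mul_smul_comm, mul_one]
    rw [hsm p, hA2ract, ← hsm (A2 p)]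
  -- conjugate symmetry of V
  have hVstar : ∀ z w : B ⊗[ℂ] B, star (V z w) = V w z :=
    star_V V haddl haddr hsmull hsmulr hpos
  -- key identities on monomials
  have key1m : ∀ (n m : ℕ) (a : Fin (n + 1) → B) (b : Fin (m + 1) → B),
      F (x * mon ιP x n a) (mon ιP x m b) = F (mon ιP x n a) (A2 (mon ιP x m b)) := by
    intro n m a b
    cases m with
    | zero =>
      rw [show A2 (mon ιP x 0 b) = 0 by rw [mon_zero]; exact hA2B _, hF0r, x_mul_mon]
      exact hFdeg (n + 1) 0 (Nat.succ_ne_zero n) _ b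
    | succ m =>
      rw [mon_succ ιP x m b, hA2mon,
        show x * mon ιP x n a = ιP (1 : B) * x * mon ιP x n a by rw [map_one, one_mul]]
      exact hFrec 1 (b 0) n m a (fun i => b i.succ)
  have hFladj : ∀ (c : B) (n m : ℕ) (a : Fin (n + 1) → B) (b : Fin (m + 1) → B),
      F (ιP c * mon ιP x n a) (mon ιP x m b)
        = F (mon ιP x n a) (ιP (star c) * mon ιP x m b) := by
    intro c n m a b
    match n, m with
    | 0, 0 =>
      rw [mon_zero, mon_zero, ← map_mul, ← map_mul, hF0, hF0, star_mul, mul_assoc]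
    | 0, m + 1 =>
      rw [iota_mul_mon, iota_mul_mon, hFdeg 0 (m + 1) (by omega), hFdeg 0 (m + 1) (by omega)]
    | n + 1, 0 =>
      rw [iota_mul_mon, iota_mul_mon, hFdeg (n + 1) 0 (by omega), hFdeg (n + 1) 0 (by omega)]
    | n + 1, m + 1 =>
      rw [mon_succ ιP x n a, mon_succ ιP x m b, ← mul_assoc (ιP c), ← mul_assoc (ιP c),
        ← map_mul, ← mul_assoc (ιP (star c)), ← mul_assoc (ιP (star c)), ← map_mul,
        hFrec, hFrec, hlact]
  have key2m : ∀ (n m : ℕ) (a : Fin (n + 1) → B) (b : Fin (m + 1) → B),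
      F (A2 (mon ιP x n a)) (mon ιP x m b) = F (mon ιP x n a) (x * mon ιP x m b) := by
    intro n m a b
    cases n with
    | zero =>
      rw [show A2 (mon ιP x 0 a) = 0 by rw [mon_zero]; exact hA2B _, hF0l, x_mul_mon]
      exact (hFdeg 0 (m + 1) (by omega) a _).symm
    | succ n =>
      rw [mon_succ ιP x n a, hA2mon, hFladj,
        show x * mon ιP x m b = ιP (1 : B) * x * mon ιP x m b by rw [map_one, one_mul],
        hFrec, hVstar]
  -- extension to all of P
  have key1 : ∀ p q : P, F (x * p) q = F p (A2 q) := by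
    intro p q
    have hp := hmem p
    have hq := hmem q
    induction hp using Submodule.span_induction with
    | mem p hp' =>
      obtain ⟨n, a, rfl⟩ := hp'
      induction hq using Submodule.span_induction with
      | mem q hq' => obtain ⟨m, b, rfl⟩ := hq'; exact key1m n m a b
      | zero => rw [hF0r, hA20, hF0r]
      | add q r hq hr ihq ihr => rw [hFaddr, hA2add, hFaddr, ihq, ihr]
      | smul c q hq ih => rw [hFsmulr, hA2smul, hFsmulr, ih]
    | zero => rw [mul_zero, hF0l, hF0l]
    | add p r hp hr ih1 ih2 => rw [mul_add, hFaddl, hFaddl, ih1, ih2]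
    | smul c p hp ih => rw [mul_smul_comm, hFsmull, hFsmull, ih]
  have key2 : ∀ p q : P, F (A2 p) q = F p (x * q) := by
    intro p q
    have hp := hmem p
    have hq := hmem q
    induction hp using Submodule.span_induction with
    | mem p hp' =>
      obtain ⟨n, a, rfl⟩ := hp'
      induction hq using Submodule.span_induction with
      | mem q hq' => obtain ⟨m, b, rfl⟩ := hq'; exact key2m n m a b
      | zero => rw [hF0r, mul_zero, hF0r]
      | add q r hq hr ihq ihr => rw [hFaddr, mul_add, hFaddr, ihq, ihr]
      | smul c q hq ih => rw [hFsmulr, mul_smul_comm, hFsmulr, ih]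
    | zero => rw [hA20, hF0l, hF0l]
    | add p r hp hr ih1 ih2 => rw [hA2add, hFaddl, hFaddl, ih1, ih2]
    | smul c p hp ih => rw [hA2smul, hFsmull, hFsmull, ih]
  refine ⟨key1, ?_, ?_⟩
  · intro p q
    rw [hFaddl, hFaddr, key1, key2, add_comm]
  · intro a b
    have h1 : A2 (1 : P) = 0 := by rw [← map_one ιP]; exact hA2B 1
    rw [h1, add_zero, mul_one]
    have hA2cx : A2 (ιP (star a * b) * x) = ιP (V ((1 : B) ⊗ₜ[ℂ] 1) ((star a * b) ⊗ₜ[ℂ] 1)) := by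
      rw [show ιP (star a * b) * x = ιP (star a * b) * x * mon ιP x 0 (fun _ => (1 : B)) by
          rw [mon_zero, map_one, mul_one],
        hA2mon, mon_zero, map_one, mul_one]
    rw [hA2cx, hFaddr]
    have hterm1 : F (1 : P) (x * (ιP (star a * b) * x)) = 0 := by
      have e1 : ιP (star a * b) * x = mon ιP x 1 (Fin.cons (star a * b) (fun _ => 1)) := by
        rw [mon_succ, mon_zero, Fin.cons_zero, Fin.cons_succ, map_one, mul_one]
      rw [e1, x_mul_mon, show (1 : P) = mon ιP x 0 (fun _ => (1 : B)) by
        rw [mon_zero, map_one]]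
      exact hFdeg 0 2 (by omega) _ _
    rw [hterm1, zero_add, show (1 : P) = ιP 1 from (map_one ιP).symm, hF0, star_one, one_mul]
    have h := hlact a 1 1 b 1
    rw [mul_one] at h
    exact h.symm
end
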